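/- arXiv:2509.25994 — 10 statements merged into one kernel-verified Lean document; each statement's English description precedes it below -/
import Mathlib

section
/- Let α ∈ (0,1) be irrational and let m, n ≥ 0 be integers. Then the pair (m,n) is balanced if and only if there do NOT exist integers 0 ≤ i < j and a value a ∈ {−1, 1} such that Δ(i,m,n) = a, Δ(j,m,n) = a, and Δ(k,m,n) = 0 for all integers k with i < k < j. -/
/-- The Sturmian sequence `a_i = ⌊(i+1)α⌋ − ⌊iα⌋` for an irrational `α ∈ (0,1)`. -/
noncomputable def sturmSeq (α : ℝ) (i : ℕ) : ℤ :=
  ⌊((i : ℝ) + 1) * α⌋ - ⌊(i : ℝ) * α⌋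

/-- `T(i,m,n)`: the number of 1's in the `m × n` word rectangle whose `(k,ℓ)` entry
is `a_{i+k+ℓ}`. -/
noncomputable def sturmT (α : ℝ) (i m n : ℕ) : ℤ :=
  ∑ k ∈ Finset.range m, ∑ l ∈ Finset.range n, sturmSeq α (i + k + l)

/-- `Δ(i,m,n) = T(i+1,m,n) − T(i,m,n)`. -/
noncomputable def sturmDelta (α : ℝ) (i m n : ℕ) : ℤ :=
  sturmT α (i + 1) m n - sturmT α i m n

/-- `(m,n)` is balanced: `{T(i,m,n) : i ≥ 0}` has at most two elements. -/
def SturmBalanced (α : ℝ) (m n : ℕ) : Prop :=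
  ∃ x y : ℤ, ∀ i : ℕ, sturmT α i m n = x ∨ sturmT α i m n = y

private lemma floor_aux (x y : ℝ) :
    0 ≤ ⌊x + y⌋ - ⌊x⌋ - ⌊y⌋ ∧ ⌊x + y⌋ - ⌊x⌋ - ⌊y⌋ ≤ 1 := by
  constructor
  · have h := Int.le_floor.2 (show ((⌊x⌋ + ⌊y⌋ : ℤ) : ℝ) ≤ x + y by
      push_cast
      exact add_le_add (Int.floor_le x) (Int.floor_le y))
    omega
  · have h := Int.floor_lt.2 (show x + y < ((⌊x⌋ + ⌊y⌋ + 2 : ℤ) : ℝ) by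
      push_cast
      have h1 := Int.lt_floor_add_one x
      have h2 := Int.lt_floor_add_one y
      linarith)
    omega

private lemma sturmT_eq (α : ℝ) (i m n : ℕ) :
    sturmT α i m n
      = ∑ k ∈ Finset.range m, (⌊((i + k + n : ℕ) : ℝ) * α⌋ - ⌊((i + k : ℕ) : ℝ) * α⌋) := by
  unfold sturmT
  refine Finset.sum_congr rfl fun k _ => ?_
  have h := Finset.sum_range_sub (f := fun l => ⌊((i + k + l : ℕ) : ℝ) * α⌋) n
  have h2 : ∀ l, sturmSeq α (i + k + l)
      = ⌊((i + k + (l + 1) : ℕ) : ℝ) * α⌋ - ⌊((i + k + l : ℕ) : ℝ) * α⌋ := by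
    intro l
    unfold sturmSeq
    congr 2
    push_cast
    ring
  calc ∑ l ∈ Finset.range n, sturmSeq α (i + k + l)
      = ∑ l ∈ Finset.range n,
          (⌊((i + k + (l + 1) : ℕ) : ℝ) * α⌋ - ⌊((i + k + l : ℕ) : ℝ) * α⌋) :=
        Finset.sum_congr rfl fun l _ => h2 l
    _ = ⌊((i + k + n : ℕ) : ℝ) * α⌋ - ⌊((i + k + 0 : ℕ) : ℝ) * α⌋ := h
    _ = ⌊((i + k + n : ℕ) : ℝ) * α⌋ - ⌊((i + k : ℕ) : ℝ) * α⌋ := by norm_num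

private lemma sturmDelta_eq (α : ℝ) (i m n : ℕ) :
    sturmDelta α i m n
      = (⌊((i + m + n : ℕ) : ℝ) * α⌋ - ⌊((i + m : ℕ) : ℝ) * α⌋)
        - (⌊((i + n : ℕ) : ℝ) * α⌋ - ⌊((i : ℕ) : ℝ) * α⌋) := by
  unfold sturmDelta
  rw [sturmT_eq, sturmT_eq]
  set g : ℕ → ℤ := fun j => ⌊((i + j + n : ℕ) : ℝ) * α⌋ - ⌊((i + j : ℕ) : ℝ) * α⌋ with hg
  have h1 : ∀ k, (⌊((i + 1 + k + n : ℕ) : ℝ) * α⌋ - ⌊((i + 1 + k : ℕ) : ℝ) * α⌋) = g (k + 1) := by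
    intro k
    simp only [hg]
    rw [show i + 1 + k + n = i + (k + 1) + n from by omega,
        show i + 1 + k = i + (k + 1) from by omega]
  have h2 : ∀ k, (⌊((i + k + n : ℕ) : ℝ) * α⌋ - ⌊((i + k : ℕ) : ℝ) * α⌋) = g k := fun k => rfl
  calc (∑ k ∈ Finset.range m, (⌊((i + 1 + k + n : ℕ) : ℝ) * α⌋ - ⌊((i + 1 + k : ℕ) : ℝ) * α⌋))
        - (∑ k ∈ Finset.range m, (⌊((i + k + n : ℕ) : ℝ) * α⌋ - ⌊((i + k : ℕ) : ℝ) * α⌋))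
      = ∑ k ∈ Finset.range m, (g (k + 1) - g k) := by
        rw [← Finset.sum_sub_distrib]
        exact Finset.sum_congr rfl fun k _ => by rw [h1 k, h2 k]
    _ = g m - g 0 := Finset.sum_range_sub g m
    _ = (⌊((i + m + n : ℕ) : ℝ) * α⌋ - ⌊((i + m : ℕ) : ℝ) * α⌋)
        - (⌊((i + n : ℕ) : ℝ) * α⌋ - ⌊((i : ℕ) : ℝ) * α⌋) := by
        simp only [hg, Nat.add_zero]

private lemma sturmDelta_bound (α : ℝ) (i m n : ℕ) :
    -1 ≤ sturmDelta α i m n ∧ sturmDelta α i m n ≤ 1 := by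
  rw [sturmDelta_eq]
  have e1 : ((i + m + n : ℕ) : ℝ) * α = ((i + m : ℕ) : ℝ) * α + (n : ℝ) * α := by
    push_cast; ring
  have e2 : ((i + n : ℕ) : ℝ) * α = ((i : ℕ) : ℝ) * α + (n : ℝ) * α := by
    push_cast; ring
  rw [e1, e2]
  have h1 := floor_aux (((i + m : ℕ) : ℝ) * α) ((n : ℝ) * α)
  have h2 := floor_aux (((i : ℕ) : ℝ) * α) ((n : ℝ) * α)
  omega

private lemma sturmT_succ (α : ℝ) (i m n : ℕ) :
    sturmT α (i + 1) m n = sturmT α i m n + sturmDelta α i m n := by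
  unfold sturmDelta; ring

private lemma sturmT_eq_of_zeros (α : ℝ) (m n i : ℕ) :
    ∀ j, i + 1 ≤ j → (∀ k, i < k → k < j → sturmDelta α k m n = 0) →
      sturmT α j m n = sturmT α (i + 1) m n := by
  intro j hij
  induction j, hij using Nat.le_induction with
  | base => intro _; rfl
  | succ j hj ih =>
    intro hz
    rw [sturmT_succ, hz j (by omega) (by omega), add_zero,
      ih fun k h1 h2 => hz k h1 (by omega)]

theorem balanced_iff_no_bad_block (α : ℝ) (hirr : Irrational α)
    (h0 : 0 < α) (h1 : α < 1) (m n : ℕ) :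
    SturmBalanced α m n ↔
      ¬ ∃ (i j : ℕ) (a : ℤ), i < j ∧ (a = -1 ∨ a = 1) ∧
        sturmDelta α i m n = a ∧ sturmDelta α j m n = a ∧
        ∀ k : ℕ, i < k → k < j → sturmDelta α k m n = 0 := by
  constructor
  · rintro ⟨x, y, hxy⟩ ⟨i, j, a, hij, ha, hdi, hdj, hz⟩
    have h1 : sturmT α (i + 1) m n = sturmT α i m n + a := by rw [sturmT_succ, hdi]
    have h2 : sturmT α j m n = sturmT α (i + 1) m n := sturmT_eq_of_zeros α m n i j hij hz
    have h3 : sturmT α (j + 1) m n = sturmT α i m n + 2 * a := by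
      rw [sturmT_succ, hdj, h2, h1]; ring
    rcases ha with rfl | rfl <;>
      rcases hxy i with e1 | e1 <;>
      rcases hxy (i + 1) with e2 | e2 <;>
      rcases hxy (j + 1) with e3 | e3 <;> omega
  · intro hnb
    by_cases hz : ∀ k, sturmDelta α k m n = 0
    · refine ⟨sturmT α 0 m n, sturmT α 0 m n, fun i => Or.inl ?_⟩
      induction i with
      | zero => rfl
      | succ i ih => rw [sturmT_succ, hz i, add_zero, ih]
    · push_neg at hz
      have hex : ∃ p, sturmDelta α p m n ≠ 0 := hz
      set p := Nat.find hex with hp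
      have hps : sturmDelta α p m n ≠ 0 := Nat.find_spec hex
      set s := sturmDelta α p m n with hsdef
      have hs : s = -1 ∨ s = 1 := by
        have hb := sturmDelta_bound α p m n
        omega
      have inv : ∀ i,
          (sturmT α i m n = sturmT α 0 m n ∧
            (i ≤ p ∨ ∃ k, k < i ∧ sturmDelta α k m n = -s ∧
              ∀ l, k < l → l < i → sturmDelta α l m n = 0))
          ∨ (sturmT α i m n = sturmT α 0 m n + s ∧
            ∃ k, k < i ∧ sturmDelta α k m n = s ∧
              ∀ l, k < l → l < i → sturmDelta α l m n = 0) := by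
        intro i
        induction i with
        | zero => exact Or.inl ⟨rfl, Or.inl (Nat.zero_le p)⟩
        | succ i ih =>
          have hbd := sturmDelta_bound α i m n
          by_cases hdi : sturmDelta α i m n = 0
          · rcases ih with ⟨hT, hcase⟩ | ⟨hT, k, hk, hks, hkz⟩
            · refine Or.inl ⟨by rw [sturmT_succ, hdi, add_zero, hT], ?_⟩
              rcases hcase with hip | ⟨k, hk, hks, hkz⟩
              · left
                rcases Nat.lt_or_ge i p with h | h
                · omega
                · exact absurd hdi (by rw [show i = p from le_antisymm hip h]; exact hps)
              · refine Or.inr ⟨k, by omega, hks, fun l hl1 hl2 => ?_⟩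
                rcases Nat.lt_or_ge l i with h | h
                · exact hkz l hl1 h
                · rw [show l = i from by omega]; exact hdi
            · refine Or.inr ⟨by rw [sturmT_succ, hdi, add_zero, hT], k, by omega, hks,
                fun l hl1 hl2 => ?_⟩
              rcases Nat.lt_or_ge l i with h | h
              · exact hkz l hl1 h
              · rw [show l = i from by omega]; exact hdi
          · have hpi : p ≤ i := Nat.find_min' hex hdi
            rcases ih with ⟨hT, hcase⟩ | ⟨hT, k, hk, hks, hkz⟩
            · rcases hcase with hip | ⟨k, hk, hks, hkz⟩
              · have hip' : i = p := le_antisymm hip hpi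
                have hds : sturmDelta α i m n = s := by rw [hip']
                refine Or.inr ⟨by rw [sturmT_succ, hT, hds], i, Nat.lt_succ_self i, hds,
                  fun l hl1 hl2 => absurd hl2 (by omega)⟩
              · have hdine : sturmDelta α i m n ≠ -s := by
                  intro h
                  exact hnb ⟨k, i, -s, hk, by rcases hs with h' | h' <;> omega, hks, h, hkz⟩
                have hds : sturmDelta α i m n = s := by rcases hs with h' | h' <;> omega
                exact Or.inr ⟨by rw [sturmT_succ, hT, hds], i, Nat.lt_succ_self i, hds,
                  fun l hl1 hl2 => absurd hl2 (by omega)⟩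
            · have hdine : sturmDelta α i m n ≠ s := fun h =>
                hnb ⟨k, i, s, hk, hs, hks, h, hkz⟩
              have hds : sturmDelta α i m n = -s := by rcases hs with h' | h' <;> omega
              exact Or.inl ⟨by rw [sturmT_succ, hT, hds]; ring,
                Or.inr ⟨i, Nat.lt_succ_self i, hds, fun l hl1 hl2 => absurd hl2 (by omega)⟩⟩
      exact ⟨sturmT α 0 m n, sturmT α 0 m n + s, fun i => (inv i).imp And.left And.left⟩
end

section
/- If m, n ≥ 2 are integers and max(m,n) is a Fibonacci number, then the pair (m,n) is balanced for the Fibonacci word. -/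
/-- `γ = (3 − √5)/2`. -/
noncomputable def gam : ℝ := (3 - Real.sqrt 5) / 2

/-- The Fibonacci word sequence `a_i = ⌊(i+1)γ⌋ − ⌊iγ⌋`. -/
noncomputable def fibSeq (i : ℕ) : ℤ :=
  ⌊((i : ℝ) + 1) * gam⌋ - ⌊(i : ℝ) * gam⌋

/-- `T(i,m,n) = ∑_{k<m} ∑_{ℓ<n} a_{i+k+ℓ}`. -/
noncomputable def fibT (i m n : ℕ) : ℤ :=
  ∑ k ∈ Finset.range m, ∑ l ∈ Finset.range n, fibSeq (i + k + l)

/-- `(m,n)` is balanced: `{T(i,m,n) : i ≥ 0}` has at most two elements. -/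
def FibBalanced (m n : ℕ) : Prop :=
  ∃ x y : ℤ, ∀ i : ℕ, fibT i m n = x ∨ fibT i m n = y

noncomputable def eps (t : ℕ) : ℝ :=
  (Nat.fib (t+1) : ℝ) - (1 + Real.sqrt 5)/2 * (Nat.fib t : ℝ)

noncomputable def ebar (t : ℕ) : ℝ :=
  (Nat.fib (t+1) : ℝ) - (1 - Real.sqrt 5)/2 * (Nat.fib t : ℝ)

lemma sqrt5_sq : Real.sqrt 5 ^ 2 = 5 := Real.sq_sqrt (by norm_num)
lemma sqrt5_gt : 2 < Real.sqrt 5 := by nlinarith [Real.sqrt_nonneg 5, sqrt5_sq]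
lemma sqrt5_lt : Real.sqrt 5 < 3 := by nlinarith [Real.sqrt_nonneg 5, sqrt5_sq]

lemma eps_succ (t : ℕ) : eps (t+1) = (1 - (1 + Real.sqrt 5)/2) * eps t := by
  unfold eps
  rw [Nat.fib_add_two]
  push_cast
  linear_combination (-(Nat.fib t : ℝ)/4) * sqrt5_sq

lemma ebar_succ (t : ℕ) : ebar (t+1) = (1 - (1 - Real.sqrt 5)/2) * ebar t := by
  unfold ebar
  rw [Nat.fib_add_two]
  push_cast
  linear_combination (-(Nat.fib t : ℝ)/4) * sqrt5_sq

lemma eps_mul_ebar : ∀ t, eps t * ebar t = (-1)^t := by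
  intro t
  induction t with
  | zero => simp [eps, ebar]
  | succ t ih =>
      rw [eps_succ, ebar_succ, pow_succ]
      linear_combination ((1 - Real.sqrt 5^2)/4) * ih - ((-1:ℝ)^t/4) * sqrt5_sq

lemma abs_eps_le_one : ∀ t, |eps t| ≤ 1 := by
  intro t
  induction t with
  | zero => simp [eps]
  | succ t ih =>
      rw [eps_succ, abs_mul]
      have h1 : |1 - (1 + Real.sqrt 5)/2| ≤ 1 := by
        rw [abs_le]; constructor <;> nlinarith [sqrt5_gt, sqrt5_lt]
      calc |1 - (1 + Real.sqrt 5)/2| * |eps t| ≤ 1 * 1 :=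
            mul_le_mul h1 ih (abs_nonneg _) (by norm_num)
        _ = 1 := by norm_num

lemma abs_eps_lt_one (t : ℕ) : |eps (t+1)| < 1 := by
  rw [eps_succ, abs_mul]
  have h1 : |1 - (1 + Real.sqrt 5)/2| < 1 := by
    rw [abs_lt]; constructor <;> nlinarith [sqrt5_gt, sqrt5_lt]
  calc |1 - (1 + Real.sqrt 5)/2| * |eps t| ≤ |1 - (1 + Real.sqrt 5)/2| * 1 :=
        mul_le_mul_of_nonneg_left (abs_eps_le_one t) (abs_nonneg _)
    _ < 1 := by linarith

lemma ebar_eq (t : ℕ) : ebar t = eps t + Real.sqrt 5 * (Nat.fib t : ℝ) := by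
  unfold eps ebar; ring

lemma ebar_pos (t : ℕ) : 0 < ebar t := by
  rcases t with _ | t
  · norm_num [ebar]
  · have h1 : (1 : ℝ) ≤ (Nat.fib (t+1) : ℝ) := by
      exact_mod_cast Nat.fib_pos.2 (Nat.succ_pos t)
    have h2 := abs_eps_le_one (t+1)
    have h3 := abs_le.1 h2
    rw [ebar_eq]
    nlinarith [sqrt5_gt]

lemma abs_eps_mul (t : ℕ) : |eps t| * ebar t = 1 := by
  have h := eps_mul_ebar t
  have hb := ebar_pos t
  have : |eps t * ebar t| = 1 := by rw [h, abs_pow, abs_neg, abs_one, one_pow]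
  rwa [abs_mul, abs_of_pos hb] at this

lemma approx (t : ℕ) (q : ℕ) (p : ℤ) (hq1 : 1 ≤ q) (hq2 : q + 1 ≤ Nat.fib t)
    (h : |(q : ℝ) * gam - (p : ℝ)| < |eps t|) : False := by
  have hs : Real.sqrt 5 ^ 2 = 5 := sqrt5_sq
  have hs2 : 2 < Real.sqrt 5 := sqrt5_gt
  set s : ℝ := Real.sqrt 5 with hsdef
  -- the integer quadratic form value
  have hDz : ((p^2 - 3*p*q + q^2 : ℤ) : ℝ)
      = ((q:ℝ)*gam - p) * (((q:ℝ)*gam - p) + (q:ℝ)*s) := by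
    push_cast
    unfold gam
    linear_combination ((q:ℝ)^2/4) * hs
  have hne : (p^2 - 3*p*(q:ℤ) + (q:ℤ)^2) ≠ 0 := by
    intro h0
    have h5 : (2*p - 3*(q:ℤ))^2 = 5 * (q:ℤ)^2 := by linear_combination 4*h0
    have hq0 : (0:ℝ) < (q:ℝ) := by exact_mod_cast hq1
    have h5r : ((2*p - 3*(q:ℤ) : ℤ):ℝ)^2 = 5 * (q:ℝ)^2 := by exact_mod_cast congrArg (Int.cast : ℤ → ℝ) h5
    have hsq : Real.sqrt 5 = |((2*p - 3*(q:ℤ) : ℤ):ℝ)| / (q:ℝ) := by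
      rw [show (5:ℝ) = (|((2*p - 3*(q:ℤ) : ℤ):ℝ)| / (q:ℝ))^2 by
        rw [div_pow, sq_abs, h5r]; field_simp]
      exact Real.sqrt_sq (by positivity)
    have hirr : Irrational (Real.sqrt 5) := (Nat.prime_five).irrational_sqrt
    apply hirr
    refine ⟨((2*p - 3*(q:ℤ)).natAbs : ℚ) / (q : ℚ), ?_⟩
    rw [hsq]
    push_cast [Nat.cast_natAbs]
    norm_num
  have h1 : (1:ℝ) ≤ |((p^2 - 3*p*q + q^2 : ℤ) : ℝ)| := by
    exact_mod_cast Int.one_le_abs hne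
  set d : ℝ := |(q : ℝ) * gam - (p : ℝ)| with hd
  have hd0 : 0 ≤ d := abs_nonneg _
  have hqs : (0:ℝ) ≤ (q:ℝ) * s := by positivity
  have h3 : |((q:ℝ)*gam - p) + (q:ℝ)*s| ≤ d + (q:ℝ)*s := by
    calc |((q:ℝ)*gam - p) + (q:ℝ)*s| ≤ |(q:ℝ)*gam - p| + |(q:ℝ)*s| := abs_add_le _ _
      _ = d + (q:ℝ)*s := by rw [abs_of_nonneg hqs]
  have h4 : (1:ℝ) ≤ d * (d + (q:ℝ)*s) := by
    rw [hDz, abs_mul] at h1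
    nlinarith [abs_nonneg (((q:ℝ)*gam - p) + (q:ℝ)*s)]
  set e : ℝ := |eps t| with hedef
  have he0 : 0 ≤ e := abs_nonneg _
  have he1 : e ≤ 1 := abs_eps_le_one t
  have heps := abs_le.1 (le_refl e)
  have hemul : e * (eps t + s * (Nat.fib t : ℝ)) = 1 := by
    have := abs_eps_mul t
    rwa [ebar_eq] at this
  have hqF : (q:ℝ) + 1 ≤ (Nat.fib t : ℝ) := by exact_mod_cast hq2
  -- chain of inequalities
  have step1 : d * (d + (q:ℝ)*s) < e * (e + (q:ℝ)*s) := by nlinarith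
  have hFq : 0 ≤ (Nat.fib t : ℝ) - 1 - (q:ℝ) := by linarith
  have hmono : 0 ≤ e * s * ((Nat.fib t : ℝ) - 1 - (q:ℝ)) :=
    mul_nonneg (mul_nonneg he0 (by linarith : (0:ℝ) ≤ s)) hFq
  have step2 : e * (e + (q:ℝ)*s) ≤ e * (e + ((Nat.fib t : ℝ) - 1)*s) := by nlinarith [hmono]
  have hint : 0 ≤ e * (s + eps t - e) := by
    have h' : 0 ≤ s + eps t - e := by nlinarith [heps.1]
    exact mul_nonneg he0 h'
  have step3 : e * (e + ((Nat.fib t : ℝ) - 1)*s) ≤ 1 := by nlinarith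
  linarith

lemma tel (j n : ℕ) : ∑ l ∈ Finset.range n, fibSeq (j + l)
    = ⌊((j:ℝ) + (n:ℝ)) * gam⌋ - ⌊(j:ℝ) * gam⌋ := by
  induction n with
  | zero => simp
  | succ n ih =>
      rw [Finset.sum_range_succ, ih]
      unfold fibSeq
      have h1 : ((j + n : ℕ) : ℝ) + 1 = (j:ℝ) + ((n:ℝ) + 1) := by push_cast; ring
      have h2 : ((j + n : ℕ) : ℝ) = (j:ℝ) + (n:ℝ) := by push_cast; ring
      have h3 : ((n:ℕ)+1 : ℕ) = ((n:ℝ) + 1 : ℝ) := by push_cast; ring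
      rw [h1, h2]
      push_cast
      ring

lemma key (m t : ℕ) (hmn : m ≤ Nat.fib t) (ht : 1 ≤ t) :
    FibBalanced m (Nat.fib t) := by
  set c : ℤ := 2 * (Nat.fib t : ℤ) - (Nat.fib (t+1) : ℤ) with hc
  set δ : ℕ → ℤ := fun j => ⌊(j:ℝ)*gam + eps t⌋ - ⌊(j:ℝ)*gam⌋ with hδ
  set e₀ : ℤ := if 0 ≤ eps t then 1 else -1 with he₀
  have hfibgam : (Nat.fib t : ℝ) * gam = (c : ℝ) + eps t := by
    rw [hc]; unfold gam eps; push_cast; ring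
  have habs : |eps t| < 1 := by
    obtain ⟨t', rfl⟩ : ∃ t', t = t' + 1 := ⟨t - 1, by omega⟩
    exact abs_eps_lt_one t'
  have habs' := abs_lt.1 habs
  have hinner : ∀ j : ℕ, (∑ l ∈ Finset.range (Nat.fib t), fibSeq (j + l)) = c + δ j := by
    intro j
    rw [tel]
    have h1 : ((j:ℝ) + (Nat.fib t : ℝ)) * gam = ((j:ℝ) * gam + eps t) + (c:ℝ) := by
      rw [add_mul, hfibgam]; ring
    rw [h1, Int.floor_add_intCast]
    simp only [hδ]
    ring
  have hT : ∀ i, fibT i m (Nat.fib t) = m * c + ∑ k ∈ Finset.range m, δ (i + k) := by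
    intro i
    unfold fibT
    rw [Finset.sum_congr rfl (fun k _ => hinner (i+k)), Finset.sum_add_distrib,
      Finset.sum_const, Finset.card_range]
    simp [nsmul_eq_mul]
  have hV : ∀ j : ℕ, δ j = 0 ∨ δ j = e₀ := by
    intro j
    have hl := Int.floor_le ((j:ℝ)*gam)
    have hu := Int.lt_floor_add_one ((j:ℝ)*gam)
    by_cases hsgn : 0 ≤ eps t
    · rw [he₀, if_pos hsgn]
      have h1 : ⌊(j:ℝ)*gam⌋ ≤ ⌊(j:ℝ)*gam + eps t⌋ := Int.floor_le_floor (by linarith)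
      have h2 : ⌊(j:ℝ)*gam + eps t⌋ ≤ ⌊(j:ℝ)*gam + 1⌋ := Int.floor_le_floor (by linarith)
      rw [Int.floor_add_one] at h2
      simp only [hδ]
      omega
    · rw [he₀, if_neg hsgn]
      push_neg at hsgn
      have h1 : ⌊(j:ℝ)*gam + eps t⌋ ≤ ⌊(j:ℝ)*gam⌋ := Int.floor_le_floor (by linarith)
      have h2 : ⌊(j:ℝ)*gam + (-1 : ℤ)⌋ ≤ ⌊(j:ℝ)*gam + eps t⌋ := by
        apply Int.floor_le_floor; push_cast; linarith
      rw [Int.floor_add_intCast] at h2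
      simp only [hδ]
      omega
  have hpair : ∀ a b : ℕ, a < b → b - a + 1 ≤ Nat.fib t → δ a ≠ 0 → δ b ≠ 0 → False := by
    intro a b hab hq ha hb
    have ha1 : δ a = e₀ := (hV a).resolve_left ha
    have hb1 : δ b = e₀ := (hV b).resolve_left hb
    have hxl := Int.floor_le ((a:ℝ)*gam)
    have hxu := Int.lt_floor_add_one ((a:ℝ)*gam)
    have hyl := Int.floor_le ((b:ℝ)*gam)
    have hyu := Int.lt_floor_add_one ((b:ℝ)*gam)
    have key2 : |((b:ℝ)*gam - ⌊(b:ℝ)*gam⌋) - ((a:ℝ)*gam - ⌊(a:ℝ)*gam⌋)| < |eps t| := by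
      by_cases hsgn : 0 ≤ eps t
      · rw [he₀, if_pos hsgn] at ha1 hb1
        simp only [hδ] at ha1 hb1
        have hfa : ⌊(a:ℝ)*gam + eps t⌋ = ⌊(a:ℝ)*gam⌋ + 1 := by omega
        have hfb : ⌊(b:ℝ)*gam + eps t⌋ = ⌊(b:ℝ)*gam⌋ + 1 := by omega
        have hxa : (⌊(a:ℝ)*gam⌋ : ℝ) + 1 ≤ (a:ℝ)*gam + eps t := by
          have h := Int.floor_le ((a:ℝ)*gam + eps t)
          rw [hfa] at h; push_cast at h; linarith
        have hxb : (⌊(b:ℝ)*gam⌋ : ℝ) + 1 ≤ (b:ℝ)*gam + eps t := by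
          have h := Int.floor_le ((b:ℝ)*gam + eps t)
          rw [hfb] at h; push_cast at h; linarith
        rw [abs_of_nonneg hsgn, abs_lt]
        constructor <;> linarith
      · rw [he₀, if_neg hsgn] at ha1 hb1
        push_neg at hsgn
        simp only [hδ] at ha1 hb1
        have hfa : ⌊(a:ℝ)*gam + eps t⌋ = ⌊(a:ℝ)*gam⌋ - 1 := by omega
        have hfb : ⌊(b:ℝ)*gam + eps t⌋ = ⌊(b:ℝ)*gam⌋ - 1 := by omega
        have hxa : (a:ℝ)*gam + eps t < (⌊(a:ℝ)*gam⌋ : ℝ) := by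
          have h := Int.lt_floor_add_one ((a:ℝ)*gam + eps t)
          rw [hfa] at h; push_cast at h; linarith
        have hxb : (b:ℝ)*gam + eps t < (⌊(b:ℝ)*gam⌋ : ℝ) := by
          have h := Int.lt_floor_add_one ((b:ℝ)*gam + eps t)
          rw [hfb] at h; push_cast at h; linarith
        rw [abs_of_neg hsgn, abs_lt]
        constructor <;> linarith
    apply approx t (b - a) (⌊(b:ℝ)*gam⌋ - ⌊(a:ℝ)*gam⌋) (by omega) (by omega)
    have heq : ((b - a : ℕ):ℝ) * gam - ((⌊(b:ℝ)*gam⌋ - ⌊(a:ℝ)*gam⌋ : ℤ):ℝ)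
        = ((b:ℝ)*gam - ⌊(b:ℝ)*gam⌋) - ((a:ℝ)*gam - ⌊(a:ℝ)*gam⌋) := by
      push_cast [Nat.cast_sub hab.le]
      ring
    rw [heq]
    exact key2
  refine ⟨m*c, m*c + e₀, fun i => ?_⟩
  rw [hT i]
  by_cases hex : ∃ k₀ ∈ Finset.range m, δ (i + k₀) ≠ 0
  · obtain ⟨k₀, hk₀m, hk₀⟩ := hex
    right
    have huniq : ∀ k ∈ Finset.range m, k ≠ k₀ → δ (i + k) = 0 := by
      intro k hk hne'
      by_contra hne0
      simp only [Finset.mem_range] at hk hk₀m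
      rcases lt_or_gt_of_ne hne' with hlt | hgt
      · exact hpair (i+k) (i+k₀) (by omega) (by omega) hne0 hk₀
      · exact hpair (i+k₀) (i+k) (by omega) (by omega) hk₀ hne0
    rw [Finset.sum_eq_single_of_mem k₀ hk₀m huniq, (hV _).resolve_left hk₀]
  · left
    push_neg at hex
    rw [Finset.sum_eq_zero hex, add_zero]

lemma fibT_comm (i m n : ℕ) : fibT i m n = fibT i n m := by
  unfold fibT
  rw [Finset.sum_comm]
  exact Finset.sum_congr rfl fun k _ => Finset.sum_congr rfl fun l _ => by
    congr 1; omega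

theorem balanced_of_max_fib (m n : ℕ) (hm : 2 ≤ m) (hn : 2 ≤ n)
    (h : ∃ t : ℕ, max m n = Nat.fib t) :
    FibBalanced m n := by
  obtain ⟨t, ht⟩ := h
  have ht1 : 1 ≤ t := by
    rcases t with _ | t
    · simp [Nat.fib] at ht; omega
    · omega
  rcases le_total m n with h1 | h1
  · rw [max_eq_right h1] at ht
    rw [ht]
    exact key m t (by omega) ht1
  · rw [max_eq_left h1] at ht
    have := key n t (by omega) ht1
    rw [← ht] at this
    obtain ⟨x, y, hxy⟩ := this
    exact ⟨x, y, fun i => by rw [fibT_comm]; exact hxy i⟩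
end

section
/- Let I ≥ 2 and let m be an integer with F_I < m ≤ F_{I+1}. Then for every integer n ≥ 1 there exists an integer j with 1 ≤ j ≤ F_{I+1} such that the pair (m, n+j) is balanced. -/
/-!
Write `φ, ψ = (1 ± √5)/2`, so that `γ = 2 - φ = ψ²` and `F_k γ ≡ ψ^k (mod 1)`.

*Best approximation.* If `0 < j < F_{I+1}` then `|jγ - p| ≥ |ψ|^I`: in the basis
`(F_I, F_{I+1}), (F_{I+1}, F_{I+2})` of `ℤ²` the quantity `jγ - p` becomes `ψ^I (a + bψ)`, and
`0 < j < F_{I+1}` forces `a ≠ 0` and `ab ≤ 0`, whence `|a + bψ| ≥ 1`.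

*Balance.* `T(i,m,n) = ∑_{k<m} (⌊(i+k+n)γ⌋ - ⌊(i+k)γ⌋)`. Writing `nγ = p + ε` with `|ε| < 1`, each
term is `p` or `p + c` for a fixed `c`, the second exactly when `{(i+k)γ}` lies in a fixed interval
of length `|ε|`. If `|ε| ≤ |ψ|^I`, best approximation puts such `k` at least `F_{I+1}` apart, so a
window of `m ≤ F_{I+1}` terms meets at most one of them and `T(·,m,n)` takes at most two values.

*Density.* Some `n + j` with `1 ≤ j ≤ F_{I+1}` has `‖(n + j)γ‖ ≤ |ψ|^I`, by an Ostrowski-type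
induction on the gaps between the multiples of `γ` modulo `1`.
-/

open Finset Real goldenRatio
open Nat (fib fib_add_two fib_le_fib_succ fib_mono)

lemma abs_goldenConj_lt_one : |ψ| < 1 :=
  abs_lt.mpr ⟨neg_one_lt_goldenConj, goldenConj_neg.trans one_pos⟩

lemma exists_int_fib_coords (I : ℕ) (j q : ℤ) : ∃ a b : ℤ,
    j = a * fib I + b * fib (I + 1) ∧ q = a * fib (I + 1) + b * fib (I + 2) := by
  induction I with
  | zero => exact ⟨q - j, j, by simp, by simp⟩
  | succ I ih =>
    obtain ⟨a, b, hj, hq⟩ := ih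
    refine ⟨b - a, a, ?_, ?_⟩
    · rw [hj, fib_add_two (n := I)]; push_cast; ring
    · rw [hq, fib_add_two (n := I + 1), fib_add_two (n := I)]; push_cast; ring

lemma one_le_abs_add_mul_goldenConj {a b : ℤ} (ha : a ≠ 0) (hab : a * b ≤ 0) :
    1 ≤ |(a : ℝ) + b * ψ| := by
  have hψ := goldenConj_neg
  rcases lt_or_gt_of_ne ha with ha | ha
  · have ha' : (a : ℝ) ≤ -1 := by exact_mod_cast Int.le_sub_one_of_lt ha
    have hb : (0 : ℝ) ≤ b := by exact_mod_cast nonneg_of_mul_nonpos_right hab ha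
    rw [abs_of_neg (by nlinarith)]; nlinarith
  · have ha' : (1 : ℝ) ≤ a := by exact_mod_cast ha
    have hb : (b : ℝ) ≤ 0 := by exact_mod_cast nonpos_of_mul_nonpos_right hab ha
    rw [abs_of_pos (by nlinarith)]; nlinarith

theorem abs_goldenConj_pow_le_abs_sub_mul_goldenRatio {I : ℕ} {j : ℤ} (q : ℤ) (hj₀ : 0 < j)
    (hj : j < fib (I + 1)) : |ψ| ^ I ≤ |q - j * φ| := by
  obtain ⟨a, b, rfl, rfl⟩ := exists_int_fib_coords I j q
  have hF : (0 : ℤ) ≤ fib I := by positivity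
  have hF' : (fib I : ℤ) ≤ fib (I + 1) := by exact_mod_cast fib_le_fib_succ
  have ha : a ≠ 0 := by
    rintro rfl
    rcases le_or_gt b 0 with hb | hb <;> nlinarith
  have hab : a * b ≤ 0 := by
    by_contra! h
    rcases pos_and_pos_or_neg_and_neg_of_mul_pos h with ⟨ha, hb⟩ | ⟨ha, hb⟩ <;> nlinarith
  have key : ((a * fib (I + 1) + b * fib (I + 2) : ℤ) : ℝ)
      - ((a * fib I + b * fib (I + 1) : ℤ) : ℝ) * φ
      = ψ ^ I * (a + b * ψ) := by
    have h₀ := fib_succ_sub_goldenRatio_mul_fib I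
    have h₁ := fib_succ_sub_goldenRatio_mul_fib (I + 1)
    push_cast
    linear_combination (a : ℝ) * h₀ + (b : ℝ) * h₁
  rw [key, abs_mul, abs_pow]
  exact le_mul_of_one_le_right (by positivity) (one_le_abs_add_mul_goldenConj ha hab)

lemma gam_eq_two_sub_goldenRatio : gam = 2 - φ := by
  unfold gam goldenRatio; ring

lemma gam_eq_goldenConj_sq : gam = ψ ^ 2 := by
  rw [goldenConj_sq]; unfold gam goldenConj; ring

lemma fib_mul_gam_eq (k : ℕ) :
    (fib k : ℝ) * gam = ((2 * fib k - fib (k + 1) : ℤ) : ℝ) + ψ ^ k := by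
  rw [← fib_succ_sub_goldenRatio_mul_fib, gam_eq_two_sub_goldenRatio]
  push_cast; ring

theorem abs_goldenConj_pow_le_abs_mul_gam_sub {I : ℕ} {j : ℤ} (p : ℤ) (hj₀ : 0 < j)
    (hj : j < fib (I + 1)) : |ψ| ^ I ≤ |j * gam - p| := by
  have h := abs_goldenConj_pow_le_abs_sub_mul_goldenRatio (2 * j - p) hj₀ hj
  rwa [gam_eq_two_sub_goldenRatio, show (j : ℝ) * (2 - φ) - p = ((2 * j - p : ℤ) : ℝ) - j * φ by
    push_cast; ring]

/-- The arcs `[jγ, jγ + ψ^k]` (`j < F_{k+1}`) and `[jγ, jγ + ψ^{k+1}]` (`j < F_k`) are the gaps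
between the first `F_{k+2}` multiples of `γ` modulo `1`. The step splits a long arc at `ψ^{k+2}`:
the inner part is a short arc of the next level, the outer part a long one starting at
`(j + F_k)γ`. -/
theorem exists_sub_mul_gam_sub_eq_mul_goldenConj_pow (k : ℕ) (x : ℝ) :
    ∃ (j : ℕ) (p : ℤ), ∃ t ∈ Set.Icc (0 : ℝ) 1,
      (j < fib k ∧ x - j * gam - p = t * ψ ^ (k + 1)) ∨
      (j < fib (k + 1) ∧ x - j * gam - p = t * ψ ^ k) := by
  induction k with
  | zero =>
    exact ⟨0, ⌊x⌋, Int.fract x, ⟨Int.fract_nonneg x, (Int.fract_lt_one x).le⟩,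
      Or.inr ⟨by simp, by rw [Int.fract]; simp⟩⟩
  | succ k ih =>
    obtain ⟨j, p, t, ⟨ht₀, ht₁⟩, ⟨hj, hy⟩ | ⟨hj, hy⟩⟩ := ih
    · exact ⟨j, p, t, ⟨ht₀, ht₁⟩, Or.inr ⟨hj.trans_le (fib_mono (by omega)), hy⟩⟩
    have hγ : 0 < gam := gam_eq_goldenConj_sq ▸ sq_pos_of_neg goldenConj_neg
    rcases le_or_gt t gam with htγ | htγ
    · refine ⟨j, p, t / gam, ⟨by positivity, (div_le_one hγ).mpr htγ⟩, Or.inl ⟨hj, ?_⟩⟩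
      rw [hy, show ψ ^ (k + 1 + 1) = ψ ^ k * gam by rw [gam_eq_goldenConj_sq]; ring]
      field_simp
    · refine ⟨j + fib k, p - (2 * fib k - fib (k + 1)), (t - 1) / ψ,
        ⟨div_nonneg_of_nonpos (by linarith) goldenConj_neg.le, ?_⟩, Or.inr ⟨?_, ?_⟩⟩
      · rw [div_le_one_of_neg goldenConj_neg]
        rw [gam_eq_goldenConj_sq, goldenConj_sq] at htγ
        linarith
      · have : fib (k + 1 + 1) = fib k + fib (k + 1) := fib_add_two
        omega
      · have := fib_mul_gam_eq k
        push_cast at this ⊢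
        rw [pow_succ, mul_comm (ψ ^ k), ← mul_assoc, div_mul_cancel₀ _ goldenConj_ne_zero]
        linear_combination hy - this

theorem exists_abs_add_mul_gam_sub_le (k : ℕ) (x : ℝ) :
    ∃ j < fib (k + 1), ∃ p : ℤ, |x + j * gam - p| ≤ |ψ| ^ k := by
  obtain ⟨j, p, t, ⟨ht₀, ht₁⟩, hgap⟩ := exists_sub_mul_gam_sub_eq_mul_goldenConj_pow k (-x)
  have hdist : ∀ l, -x - j * gam - p = t * ψ ^ l → |x + j * gam - ((-p : ℤ) : ℝ)| ≤ |ψ| ^ l :=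
    fun l hy => by
      rw [show x + j * gam - ((-p : ℤ) : ℝ) = -(-x - j * gam - p) by push_cast; ring, abs_neg,
        hy, abs_mul, abs_pow, abs_of_nonneg ht₀]
      exact mul_le_of_le_one_left (by positivity) ht₁
  rcases hgap with ⟨hj, hy⟩ | ⟨hj, hy⟩
  · exact ⟨j, hj.trans_le fib_le_fib_succ, -p, (hdist _ hy).trans
      (pow_le_pow_of_le_one (abs_nonneg ψ) abs_goldenConj_lt_one.le k.le_succ)⟩
  · exact ⟨j, hj, -p, hdist _ hy⟩

lemma exists_floor_add_sub_floor_eq_zero_or_eq {ε : ℝ} (hε : |ε| < 1) :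
    ∃ c : ℤ, ∀ y : ℝ, ⌊y + ε⌋ - ⌊y⌋ = 0 ∨ ⌊y + ε⌋ - ⌊y⌋ = c := by
  obtain ⟨hε₁, hε₂⟩ := abs_lt.mp hε
  rcases le_or_gt 0 ε with h | h
  · refine ⟨1, fun y => ?_⟩
    have h₁ : ⌊y⌋ ≤ ⌊y + ε⌋ := Int.floor_le_floor (by linarith)
    have h₂ : ⌊y + ε⌋ ≤ ⌊y + 1⌋ := Int.floor_le_floor (by linarith)
    rw [Int.floor_add_one] at h₂
    omega
  · refine ⟨-1, fun y => ?_⟩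
    have h₁ : ⌊y + ε⌋ ≤ ⌊y⌋ := Int.floor_le_floor (by linarith)
    have h₂ : ⌊y - 1⌋ ≤ ⌊y + ε⌋ := Int.floor_le_floor (by linarith)
    rw [Int.floor_sub_one] at h₂
    omega

lemma abs_fract_sub_fract_lt {ε y z : ℝ} (hy : ⌊y + ε⌋ ≠ ⌊y⌋) (hz : ⌊z + ε⌋ ≠ ⌊z⌋) :
    |Int.fract y - Int.fract z| < |ε| := by
  rw [abs_sub_lt_iff]
  rcases le_or_gt 0 ε with h | h
  · have key : ∀ w : ℝ, ⌊w + ε⌋ ≠ ⌊w⌋ → 1 - ε ≤ Int.fract w := fun w hw => by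
      have hlt : ⌊w⌋ < ⌊w + ε⌋ := lt_of_le_of_ne (Int.floor_le_floor (by linarith)) hw.symm
      have := (Int.le_floor.mp hlt : ((⌊w⌋ + 1 : ℤ) : ℝ) ≤ w + ε)
      push_cast at this
      rw [Int.fract]; linarith
    have := key y hy; have := key z hz
    rw [abs_of_nonneg h]
    constructor <;> linarith [Int.fract_lt_one y, Int.fract_lt_one z]
  · have key : ∀ w : ℝ, ⌊w + ε⌋ ≠ ⌊w⌋ → Int.fract w < -ε := fun w hw => by
      have hlt : ⌊w + ε⌋ < ⌊w⌋ := lt_of_le_of_ne (Int.floor_le_floor (by linarith)) hw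
      have := Int.floor_lt.mp hlt
      rw [Int.fract]; linarith
    have := key y hy; have := key z hz
    rw [abs_of_neg h]
    constructor <;> linarith [Int.fract_nonneg y, Int.fract_nonneg z]

lemma sum_range_eq_zero_or_eq {β : Type*} [AddCommMonoid β] {e : ℕ → β} {c : β} {M : ℕ}
    (he : ∀ t, e t = 0 ∨ e t = c) (hsep : ∀ t t', t < t' → t' < t + M → e t ≠ 0 → e t' = 0)
    (i : ℕ) {m : ℕ} (hm : m ≤ M) :
    ∑ k ∈ range m, e (i + k) = 0 ∨ ∑ k ∈ range m, e (i + k) = c := by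
  induction m with
  | zero => simp
  | succ m ih =>
    rw [sum_range_succ]
    by_cases h : e (i + m) = 0
    · simpa [h] using ih (by omega)
    · have hzero : ∑ k ∈ range m, e (i + k) = 0 := sum_eq_zero fun k hk =>
        not_not.mp fun hk' => h (hsep _ _ (by simp at hk; omega) (by omega) hk')
      simp [hzero, (he _).resolve_left h]

lemma fibT_eq_sum_floor_sub (i m n : ℕ) :
    fibT i m n = ∑ k ∈ range m, (⌊((i + k + n : ℕ) : ℝ) * gam⌋ - ⌊((i + k : ℕ) : ℝ) * gam⌋) := by
  refine sum_congr rfl fun k _ => ?_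
  have h := sum_range_sub (fun l => ⌊((i + k + l : ℕ) : ℝ) * gam⌋) n
  rw [add_zero] at h
  rw [← h]
  refine sum_congr rfl fun l _ => ?_
  simp only [fibSeq]
  push_cast
  ring_nf

theorem fibBalanced_of_abs_mul_gam_sub_le {I m n : ℕ} {p : ℤ} (hI : 1 ≤ I)
    (hm : m ≤ fib (I + 1)) (h : |n * gam - p| ≤ |ψ| ^ I) : FibBalanced m n := by
  set ε := (n : ℝ) * gam - p with hε_def
  have hε : |ε| < 1 := h.trans_lt (pow_lt_one₀ (abs_nonneg ψ) abs_goldenConj_lt_one (by omega))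
  obtain ⟨c, hc⟩ := exists_floor_add_sub_floor_eq_zero_or_eq hε
  set e : ℕ → ℤ := fun t => ⌊t * gam + ε⌋ - ⌊t * gam⌋
  have hsep : ∀ t t', t < t' → t' < t + fib (I + 1) → e t ≠ 0 → e t' = 0 := by
    intro t t' hlt hlt' ht
    by_contra ht'
    have hclose := abs_fract_sub_fract_lt (sub_ne_zero.mp ht') (sub_ne_zero.mp ht)
    have hfar := abs_goldenConj_pow_le_abs_mul_gam_sub (⌊t' * gam⌋ - ⌊t * gam⌋)
      (I := I) (j := t' - t) (by omega) (by omega)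
    rw [show ((t' - t : ℤ) : ℝ) * gam - ((⌊t' * gam⌋ - ⌊t * gam⌋ : ℤ) : ℝ)
      = Int.fract (t' * gam) - Int.fract (t * gam) by rw [Int.fract, Int.fract]; push_cast; ring]
      at hfar
    linarith
  refine ⟨m * p, m * p + c, fun i => ?_⟩
  have hshift : ∀ k, ⌊((i + k + n : ℕ) : ℝ) * gam⌋ - ⌊((i + k : ℕ) : ℝ) * gam⌋ = p + e (i + k) :=
    fun k => by
      rw [show ((i + k + n : ℕ) : ℝ) * gam = ((i + k : ℕ) : ℝ) * gam + ε + p by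
        rw [hε_def]; push_cast; ring, Int.floor_add_intCast]
      ring
  have hT : fibT i m n = m * p + ∑ k ∈ range m, e (i + k) := by
    rw [fibT_eq_sum_floor_sub]
    simp only [hshift]
    rw [sum_add_distrib, sum_const, card_range, nsmul_eq_mul]
  rcases sum_range_eq_zero_or_eq (fun t => hc _) hsep i hm with hsum | hsum
  · exact Or.inl (by rw [hT, hsum, add_zero])
  · exact Or.inr (by rw [hT, hsum])

theorem balanced_density_general (I m : ℕ) (hI : 2 ≤ I)
    (hm₂ : m ≤ Nat.fib (I + 1)) :
    ∀ n : ℕ, 1 ≤ n → ∃ j : ℕ, 1 ≤ j ∧ j ≤ Nat.fib (I + 1) ∧ FibBalanced m (n + j) := by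
  intro n _
  obtain ⟨j, hj, p, hp⟩ := exists_abs_add_mul_gam_sub_le I ((n + 1) * gam)
  refine ⟨j + 1, by omega, by omega, fibBalanced_of_abs_mul_gam_sub_le (p := p) (by omega) hm₂ ?_⟩
  convert hp using 3
  push_cast
  ring

theorem balanced_density (I m : ℕ) (hI : 2 ≤ I)
    (hm₁ : Nat.fib I < m) (hm₂ : m ≤ Nat.fib (I + 1)) :
    ∀ n : ℕ, 1 ≤ n → ∃ j : ℕ, 1 ≤ j ∧ j ≤ Nat.fib (I + 1) ∧ FibBalanced m (n + j) :=
  balanced_density_general I m hI hm₂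
end

section
/- For every integer n ≥ 1, T((F_{6n−1} − 1)/4, F_{6n}/2, F_{6n}/2) − T((F_{6n+2} − 1)/4, F_{6n}/2, F_{6n}/2) = 2n. (Here F_{6n} is even and F_{6n−1} ≡ F_{6n+2} ≡ 1 (mod 4), so all arguments are integers.) -/
/-- The infinite Fibonacci word `f_i = ⌊(i+2)γ⌋ − ⌊(i+1)γ⌋`, so `f = 0100101⋯`. -/
noncomputable def fw (i : ℕ) : ℤ :=
  ⌊((i : ℝ) + 2) * gam⌋ - ⌊((i : ℝ) + 1) * gam⌋

/-- `T(i,m,n) = ∑_{k<m} ∑_{ℓ<n} f_{i+k+ℓ}`. -/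
noncomputable def fwT (i m n : ℕ) : ℤ :=
  ∑ k ∈ Finset.range m, ∑ l ∈ Finset.range n, fw (i + k + l)


/-! The partial sums `S K = ∑_{k ≤ K} ⌊kγ⌋` obey the reciprocity law
`2 S K + 3 J² + J = 2 S J + 2 K J` for `J = ⌊Kγ⌋`, which comes from `1/γ = 3 - γ`.
Since `T(i, m, m)` is a second difference of `S`, the left-hand side is a third difference of `S`
with step `F_{6n}/2`. Writing `F_{6n-1} = 4d + 5` and `F_{6n} = 4e`, Cassini's identity determines
`⌊Kγ⌋` for every `K` that is a suitable linear form in `d, e`, and three applications of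
reciprocity per term carry the third difference at `n + 1` back to the one at `n`, plus `2`. -/

open Finset Nat

lemma lt_gam : 0.38 < gam := by
  have : (2.24 : ℝ) > Real.sqrt 5 := (Real.sqrt_lt' (by norm_num)).2 (by norm_num)
  unfold gam; linarith

lemma gam_lt : gam < 0.382 := by
  have : (2.236 : ℝ) < Real.sqrt 5 := (Real.lt_sqrt (by norm_num)).2 (by norm_num)
  unfold gam; linarith

lemma gam_pos : 0 < gam := by linarith [lt_gam]

lemma gam_mul_three_sub_gam : gam * (3 - gam) = 1 := by
  have := Real.sq_sqrt (show (0 : ℝ) ≤ 5 by norm_num)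
  unfold gam; linear_combination -this / 4

lemma irrational_gam : Irrational gam := by
  have h : Irrational ((3 : ℤ) - Real.sqrt 5) := Nat.prime_five.irrational_sqrt.intCast_sub 3
  simpa [gam] using h.div_natCast two_ne_zero

noncomputable def floorGam (k : ℕ) : ℕ := ⌊(k : ℝ) * gam⌋₊

noncomputable def floorGamSum (K : ℕ) : ℕ := ∑ k ∈ range (K + 1), floorGam k

lemma floorGamSum_succ (K : ℕ) : floorGamSum (K + 1) = floorGamSum K + floorGam (K + 1) :=
  sum_range_succ _ _

lemma natCast_floorGam (k : ℕ) : (floorGam k : ℤ) = ⌊(k : ℝ) * gam⌋ :=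
  Int.natCast_floor_eq_floor (by positivity [gam_pos])

lemma floorGam_eq_of_sq_bounds {K : ℕ} {J : ℤ}
    (hlo : (3 * K - 2 * J - 2) ^ 2 < 5 * (K : ℤ) ^ 2)
    (hhi : 5 * (K : ℤ) ^ 2 < (3 * K - 2 * J) ^ 2) : (floorGam K : ℤ) = J := by
  have h5 : Real.sqrt 5 ^ 2 = 5 := Real.sq_sqrt (by norm_num)
  have hsq : ((K : ℝ) * Real.sqrt 5) ^ 2 = 5 * (K : ℝ) ^ 2 := by rw [mul_pow, h5]; ring
  have hupper : (K : ℝ) * Real.sqrt 5 < 3 * K - 2 * J :=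
    lt_of_pow_lt_pow_left₀ 2 (by exact_mod_cast (by linarith : (0 : ℤ) ≤ 3 * K - 2 * J))
      (by rw [hsq]; exact_mod_cast hhi)
  have hlower : 3 * K - 2 * J - 2 < (K : ℝ) * Real.sqrt 5 :=
    lt_of_pow_lt_pow_left₀ 2 (by positivity) (by rw [hsq]; exact_mod_cast hlo)
  rw [natCast_floorGam, Int.floor_eq_iff, gam]
  constructor <;> linarith

lemma floorGam_succ_eq_or (K : ℕ) :
    floorGam (K + 1) = floorGam K ∨ floorGam (K + 1) = floorGam K + 1 := by
  have hK : 0 ≤ (K : ℝ) * gam := by positivity [gam_pos]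
  have hmono : floorGam K ≤ floorGam (K + 1) :=
    Nat.floor_le_floor (by push_cast; nlinarith [gam_pos])
  have hstep : floorGam (K + 1) ≤ floorGam K + 1 := by
    rw [floorGam, floorGam, ← Nat.floor_add_one hK]
    exact Nat.floor_le_floor (by push_cast; linarith [gam_lt])
  omega

-- Multiplying `Kγ < J < (K + 1)γ` by `1/γ = 3 - γ` gives `3J - K - 1 < Jγ < 3J - K`.
lemma floorGam_floorGam_of_jump {K : ℕ} (h : floorGam (K + 1) = floorGam K + 1) :
    floorGam (floorGam (K + 1)) + K + 1 = 3 * floorGam (K + 1) := by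
  set J := floorGam (K + 1)
  have hJ_le : (J : ℝ) ≤ (K + 1) * gam := by
    have : (J : ℝ) ≤ ((K + 1 : ℕ) : ℝ) * gam := Nat.floor_le (by positivity [gam_pos])
    push_cast at this; exact this
  have hJ_lt : (J : ℝ) < (K + 1) * gam := by
    refine hJ_le.lt_of_ne fun hEq => ?_
    exact (irrational_gam.natCast_mul (Nat.succ_ne_zero K)).ne_nat J (by push_cast; exact hEq.symm)
  have hK_lt : (K : ℝ) * gam < J := by
    have := Nat.lt_floor_add_one ((K : ℝ) * gam)
    rw [← floorGam, show floorGam K = J - 1 by omega] at this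
    rwa [Nat.cast_sub (by omega), Nat.cast_one, sub_add_cancel] at this
  have hg := gam_mul_three_sub_gam
  have hpos : 0 < 3 - gam := by linarith [gam_lt]
  have h1 : (J : ℝ) * (3 - gam) < K + 1 := by nlinarith [mul_lt_mul_of_pos_right hJ_lt hpos]
  have h2 : (K : ℝ) < J * (3 - gam) := by nlinarith [mul_lt_mul_of_pos_right hK_lt hpos]
  suffices (floorGam J : ℤ) = 3 * J - K - 1 by omega
  rw [natCast_floorGam, Int.floor_eq_iff]
  push_cast
  constructor <;> nlinarith

lemma floorGamSum_reciprocity (K : ℕ) :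
    2 * floorGamSum K + 3 * floorGam K ^ 2 + floorGam K
      = 2 * floorGamSum (floorGam K) + 2 * K * floorGam K := by
  induction K with
  | zero => simp [floorGam, floorGamSum]
  | succ K ih =>
    rcases floorGam_succ_eq_or K with hflat | hjump
    · rw [floorGamSum_succ, hflat]
      linear_combination ih
    · have hJ := floorGam_floorGam_of_jump hjump
      rw [hjump] at hJ ⊢
      rw [floorGamSum_succ, floorGamSum_succ, hjump]
      linear_combination ih - 2 * hJ

lemma floorGamSum_reciprocity_of_sq_bounds (K J : ℕ)
    (hlo : (3 * K - 2 * J - 2 : ℤ) ^ 2 < 5 * K ^ 2)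
    (hhi : 5 * (K : ℤ) ^ 2 < (3 * K - 2 * J) ^ 2) :
    2 * (floorGamSum K : ℤ) + 3 * J ^ 2 + J = 2 * floorGamSum J + 2 * K * J := by
  have hJ : floorGam K = J := by exact_mod_cast floorGam_eq_of_sq_bounds hlo hhi
  have := floorGamSum_reciprocity K
  rw [hJ] at this
  exact_mod_cast this

lemma fw_eq_floorGam_sub (i : ℕ) : fw i = (floorGam (i + 2) : ℤ) - floorGam (i + 1) := by
  rw [fw, natCast_floorGam, natCast_floorGam]
  push_cast
  rfl

lemma sum_range_floorGam_add (a m : ℕ) :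
    ∑ k ∈ range m, (floorGam (a + 1 + k) : ℤ) = floorGamSum (a + m) - floorGamSum a := by
  rw [floorGamSum, floorGamSum, add_right_comm, sum_range_add]
  push_cast
  ring

lemma fwT_self_eq (i m : ℕ) :
    fwT i m m = (floorGamSum (i + 2 * m) : ℤ) - 2 * floorGamSum (i + m) + floorGamSum i := by
  have hrow (k : ℕ) : ∑ l ∈ range m, fw (i + k + l)
      = (floorGam (i + m + 1 + k) : ℤ) - floorGam (i + 1 + k) := by
    simp_rw [fw_eq_floorGam_sub]
    convert sum_range_sub (fun l => (floorGam (i + 1 + k + l) : ℤ)) m using 3 <;> ring_nf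
  simp_rw [fwT, hrow, sum_sub_distrib, sum_range_floorGam_add]
  rw [show i + m + m = i + 2 * m by ring]
  ring

noncomputable def thirdDiff (i m : ℕ) : ℤ :=
  floorGamSum i - 3 * floorGamSum (i + m) + 3 * floorGamSum (i + 2 * m) - floorGamSum (i + 3 * m)

lemma fwT_sub_fwT_eq_thirdDiff (i m : ℕ) : fwT i m m - fwT (i + m) m m = thirdDiff i m := by
  rw [fwT_self_eq, fwT_self_eq, thirdDiff, show i + m + 2 * m = i + 3 * m by ring,
    show i + m + m = i + 2 * m by ring]
  ring

lemma le_and_le_of_cassini {d e : ℕ}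
    (hC : (4 * d + 5) ^ 2 + (4 * d + 5) * (4 * e) = (4 * e) ^ 2 + 1) :
    d + 2 ≤ e ∧ e ≤ 2 * d + 2 := by
  constructor <;> nlinarith

lemma thirdDiff_step {d e : ℕ} (hC : (4 * d + 5) ^ 2 + (4 * d + 5) * (4 * e) = (4 * e) ^ 2 + 1) :
    thirdDiff (5 * d + 8 * e + 6) (16 * d + 26 * e + 20) = thirdDiff (d + 1) (2 * e) + 2 := by
  obtain ⟨hde, hed⟩ := le_and_le_of_cassini hC
  have hC' : ((4 * d + 5) ^ 2 + (4 * d + 5) * (4 * e) : ℤ) = (4 * e) ^ 2 + 1 := by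
    exact_mod_cast hC
  have hde' : (d : ℤ) + 2 ≤ e := by exact_mod_cast hde
  have hed' : (e : ℤ) ≤ 2 * d + 2 := by exact_mod_cast hed
  -- Each `S K` at the new scale is reduced to the old scale by three reciprocity steps; the
  -- conditions `J = ⌊Kγ⌋` left as side goals are linear in `d, e` modulo `hC'`.
  have r0 := floorGamSum_reciprocity_of_sq_bounds (5*d + 8*e + 6) (2*d + 3*e + 2) ?_ ?_
  have r1 := floorGamSum_reciprocity_of_sq_bounds (2*d + 3*e + 2) (d + e + 1) ?_ ?_
  have r2 := floorGamSum_reciprocity_of_sq_bounds (d + e + 1) (d + 1) ?_ ?_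
  have r3 := floorGamSum_reciprocity_of_sq_bounds (21*d + 34*e + 26) (8*d + 13*e + 9) ?_ ?_
  have r4 := floorGamSum_reciprocity_of_sq_bounds (8*d + 13*e + 9) (3*d + 5*e + 3) ?_ ?_
  have r5 := floorGamSum_reciprocity_of_sq_bounds (3*d + 5*e + 3) (d + 2*e) ?_ ?_
  have r6 := floorGamSum_reciprocity_of_sq_bounds (37*d + 60*e + 46) (14*d + 23*e + 17) ?_ ?_
  have r7 := floorGamSum_reciprocity_of_sq_bounds (14*d + 23*e + 17) (5*d + 9*e + 6) ?_ ?_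
  have r8 := floorGamSum_reciprocity_of_sq_bounds (5*d + 9*e + 6) (d + 4*e + 1) ?_ ?_
  have r9 := floorGamSum_reciprocity_of_sq_bounds (53*d + 86*e + 66) (20*d + 33*e + 24) ?_ ?_
  have r10 := floorGamSum_reciprocity_of_sq_bounds (20*d + 33*e + 24) (7*d + 13*e + 8) ?_ ?_
  have r11 := floorGamSum_reciprocity_of_sq_bounds (7*d + 13*e + 8) (d + 6*e) ?_ ?_
  have f1 : (floorGam (d + 2*e + 1) : ℤ) = e - 1 := floorGam_eq_of_sq_bounds ?_ ?_
  have f2 : (floorGam (d + 6*e + 1) : ℤ) = 5*e - 4*d - 6 := floorGam_eq_of_sq_bounds ?_ ?_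
  · have s1 := floorGamSum_succ (d + 2*e)
    have s2 := floorGamSum_succ (d + 6*e)
    simp only [thirdDiff]
    rw [show 5*d + 8*e + 6 + (16*d + 26*e + 20) = 21*d + 34*e + 26 by ring,
      show 5*d + 8*e + 6 + 2 * (16*d + 26*e + 20) = 37*d + 60*e + 46 by ring,
      show 5*d + 8*e + 6 + 3 * (16*d + 26*e + 20) = 53*d + 86*e + 66 by ring,
      show d + 1 + 2 * e = d + 2*e + 1 by ring, show d + 1 + 2 * (2 * e) = d + 4*e + 1 by ring,
      show d + 1 + 3 * (2 * e) = d + 6*e + 1 by ring, s1, s2]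
    push_cast at r0 r1 r2 r3 r4 r5 r6 r7 r8 r9 r10 r11 ⊢
    linarith
  all_goals push_cast; linarith

/-- `γ = 0.3819…`, so no integer separates `0.382 k` from `kγ` while `k ≤ 13`. -/
lemma floorGam_eq_of_le_thirteen {k : ℕ} (hk : k ≤ 13) : floorGam k = k * 382 / 1000 := by
  have h1 := lt_gam
  have h2 := gam_lt
  interval_cases k <;> rw [floorGam, Nat.floor_eq_iff (by positivity [gam_pos])] <;>
    constructor <;> norm_num <;> linarith

lemma thirdDiff_one_four : thirdDiff 1 4 = 2 := by
  have hS {K : ℕ} (hK : K ≤ 13) : floorGamSum K = ∑ k ∈ range (K + 1), k * 382 / 1000 :=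
    sum_congr rfl fun k hk => floorGam_eq_of_le_thirteen (by simp at hk; omega)
  rw [thirdDiff, hS (by norm_num), hS (by norm_num), hS (by norm_num), hS (by norm_num)]
  decide

lemma exists_fib_eq_thirdDiff (k : ℕ) :
    ∃ d e : ℕ, fib (6 * k + 5) = 4 * d + 5 ∧ fib (6 * k + 6) = 4 * e ∧
      (4 * d + 5) ^ 2 + (4 * d + 5) * (4 * e) = (4 * e) ^ 2 + 1 ∧
      thirdDiff (d + 1) (2 * e) = 2 * (k + 1) := by
  induction k with
  | zero => exact ⟨0, 2, rfl, rfl, rfl, by simpa using thirdDiff_one_four⟩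
  | succ k ih =>
    obtain ⟨d, e, hd, he, hC, hT⟩ := ih
    have hd' : fib (6 * (k + 1) + 5) = 5 * fib (6 * k + 5) + 8 * fib (6 * k + 6) := by
      rw [show 6 * (k + 1) + 5 = 6 * k + 5 + 5 + 1 by ring, fib_add]
      norm_num [fib_add_two]
      ring
    have he' : fib (6 * (k + 1) + 6) = 8 * fib (6 * k + 5) + 13 * fib (6 * k + 6) := by
      rw [show 6 * (k + 1) + 6 = 6 * k + 5 + 6 + 1 by ring, fib_add]
      norm_num [fib_add_two]
      ring
    refine ⟨5 * d + 8 * e + 5, 8 * d + 13 * e + 10, by rw [hd', hd, he]; ring,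
      by rw [he', hd, he]; ring, by linear_combination hC, ?_⟩
    rw [show 2 * (8 * d + 13 * e + 10) = 16 * d + 26 * e + 20 by ring, thirdDiff_step hC, hT]
    push_cast
    ring

theorem fwT_diff_eq_two_n (n : ℕ) (hn : 1 ≤ n) :
    fwT ((Nat.fib (6 * n - 1) - 1) / 4) (Nat.fib (6 * n) / 2) (Nat.fib (6 * n) / 2)
      - fwT ((Nat.fib (6 * n + 2) - 1) / 4) (Nat.fib (6 * n) / 2) (Nat.fib (6 * n) / 2)
      = 2 * (n : ℤ) := by
  obtain ⟨k, rfl⟩ := Nat.exists_eq_add_of_le' hn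
  obtain ⟨d, e, hd, he, -, hT⟩ := exists_fib_eq_thirdDiff k
  have h7 : fib (6 * k + 7) = fib (6 * k + 5) + fib (6 * k + 6) := fib_add_two
  have h8 : fib (6 * k + 8) = fib (6 * k + 6) + fib (6 * k + 7) := fib_add_two
  rw [show 6 * (k + 1) + 2 = 6 * k + 8 by ring, h8, h7, show 6 * (k + 1) - 1 = 6 * k + 5 by omega,
    show 6 * (k + 1) = 6 * k + 6 by ring, hd, he,
    show (4 * d + 5 - 1) / 4 = d + 1 by omega, show 4 * e / 2 = 2 * e by omega,
    show (4 * e + (4 * d + 5 + 4 * e) - 1) / 4 = d + 1 + 2 * e by omega,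
    fwT_sub_fwT_eq_thirdDiff, hT]
  push_cast
  ring
end

section
/- For every integer n ≥ 0, the 1×n Tribonacci word rectangles are 2-balanced with respect to each other; that is, |N_c(i,1,n) − N_c(j,1,n)| ≤ 2 for all i, j ≥ 0 and all c ∈ {0,1,2}. -/
/-- The Tribonacci morphism `0→01, 1→02, 2→0`. -/
def tribMorph : ℕ → List ℕ
  | 0 => [0, 1]
  | 1 => [0, 2]
  | _ => [0]

/-- Iterates of the Tribonacci morphism applied to `0`; `tribBlock k` is a prefix of
the Tribonacci word of length at least `k + 1`. -/
def tribBlock : ℕ → List ℕ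
  | 0 => [0]
  | k + 1 => (tribBlock k).flatMap tribMorph

/-- The Tribonacci word `TR = 0102010⋯`, the fixed point starting with `0` of the
morphism `0→01, 1→02, 2→0`. -/
def trib (i : ℕ) : ℕ := (tribBlock (i + 1)).getD i 0

/-- `N_c(i,m,n)`: the number of occurrences of the letter `c` in the `m × n` word
rectangle whose `(k,ℓ)` entry is `t_{i+k+ℓ}`. -/
def tribN (c i m n : ℕ) : ℕ :=
  ∑ k ∈ Finset.range m, ∑ l ∈ Finset.range n, if trib (i + k + l) = c then 1 else 0

/-!
Let `β` be the real root of `x³ = x² + x + 1` and `α = β^{-(c+1)}` the frequency of the letter `c`,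
and let `g(x) = |t₀ ⋯ t_{x-1}|_c - α x` be the discrepancy of the prefix of length `x`. The block
`σᵐ(0)` has length `T(m+3)` (Tribonacci numbers), and the greedy (Dumont–Thomas) expansion writes
every prefix of `TR` as a product of distinct blocks `σᵐ(0)`. Hence `g(x) = ∑_{m ∈ s} g(T(m+3))`
for some set `s`, and two values of `g` differ by at most `∑ₘ |g(T(m+3))|`. The terms
`g(T(m+3))` lie in the contracting eigenspace of the Tribonacci recurrence and decay like
`β^{-m/2}`; bounding the first twenty numerically keeps the whole sum below `3/2`. As
`N_c(i,1,n) = g(i+n) - g(i) + α n`, two such counts differ by less than `3`.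
-/

open Finset

def tribonacci : ℕ → ℕ
  | 0 => 0
  | 1 => 0
  | 2 => 1
  | k + 3 => tribonacci (k + 2) + tribonacci (k + 1) + tribonacci k

lemma tribonacci_add_three (k : ℕ) :
    tribonacci (k + 3) = tribonacci (k + 2) + tribonacci (k + 1) + tribonacci k := rfl

lemma tribonacci_pos : ∀ k, 0 < tribonacci (k + 2)
  | 0 => Nat.one_pos
  | k + 1 => by
    have := tribonacci_pos k
    rw [tribonacci_add_three]
    omega

lemma lt_tribonacci : ∀ k, k < tribonacci (k + 3)
  | 0 => Nat.one_pos
  | k + 1 => by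
    have h1 : k < tribonacci (k + 3) := lt_tribonacci k
    have h2 : 0 < tribonacci (k + 2) := tribonacci_pos k
    show k + 1 < tribonacci (k + 3) + tribonacci (k + 2) + tribonacci (k + 1)
    omega

lemma tribBlock_add_three (k : ℕ) :
    tribBlock (k + 3) = tribBlock (k + 2) ++ tribBlock (k + 1) ++ tribBlock k := by
  induction k with
  | zero => rfl
  | succ k ih =>
    have : tribBlock (k + 4) =
        (tribBlock (k + 2) ++ tribBlock (k + 1) ++ tribBlock k).flatMap tribMorph := by
      rw [← ih]; rfl
    rw [this, List.flatMap_append, List.flatMap_append]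
    rfl

lemma length_tribBlock : ∀ k, (tribBlock k).length = tribonacci (k + 3)
  | 0 | 1 | 2 => rfl
  | k + 3 => by
    rw [tribBlock_add_three, List.length_append, List.length_append, length_tribBlock (k + 2),
      length_tribBlock (k + 1), length_tribBlock k]
    rfl

lemma count_tribBlock {c : ℕ} (hc : c ≤ 2) : ∀ k, (tribBlock k).count c = tribonacci (k + 2 - c)
  | 0 | 1 | 2 => by interval_cases c <;> rfl
  | k + 3 => by
    rw [tribBlock_add_three, List.count_append, List.count_append, count_tribBlock hc (k + 2),
      count_tribBlock hc (k + 1), count_tribBlock hc k, show k + 3 + 2 - c = k + 2 - c + 3 by omega,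
      tribonacci_add_three, show k + 2 - c + 2 = k + 2 + 2 - c by omega,
      show k + 2 - c + 1 = k + 1 + 2 - c by omega]

lemma tribBlock_prefix_succ (k : ℕ) : tribBlock k <+: tribBlock (k + 1) := by
  induction k with
  | zero => exact ⟨[1], rfl⟩
  | succ k ih =>
    obtain ⟨t, ht⟩ := ih
    refine ⟨t.flatMap tribMorph, ?_⟩
    show (tribBlock k).flatMap tribMorph ++ _ = (tribBlock (k + 1)).flatMap tribMorph
    rw [← ht, List.flatMap_append]

lemma tribBlock_prefix_of_le {k k' : ℕ} (h : k ≤ k') : tribBlock k <+: tribBlock k' := by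
  induction k', h using Nat.le_induction with
  | base => exact List.prefix_refl _
  | succ k' _ ih => exact ih.trans (tribBlock_prefix_succ k')

lemma tribBlock_append_prefix : ∀ k, tribBlock (k + 1) ++ tribBlock k <+: tribBlock (k + 2)
  | 0 => ⟨[2], rfl⟩
  | k + 1 => ⟨tribBlock k, (tribBlock_add_three k).symm⟩

lemma List.IsPrefix.getD_eq {α : Type*} {u w : List α} (h : u <+: w) {i : ℕ} (hi : i < u.length)
    (d : α) : w.getD i d = u.getD i d := by
  obtain ⟨t, rfl⟩ := h
  exact List.getD_append u t d i hi

lemma trib_eq_getD_tribBlock {i k : ℕ} (h : i < tribonacci (k + 3)) :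
    trib i = (tribBlock k).getD i 0 := by
  have hk : i < (tribBlock k).length := (length_tribBlock k).symm ▸ h
  have hi : i < (tribBlock (i + 1)).length :=
    (length_tribBlock _).symm ▸ (lt_tribonacci (i + 1)).trans' (Nat.lt_succ_self i)
  rw [trib, ← (tribBlock_prefix_of_le (le_max_right k (i + 1))).getD_eq hi,
    (tribBlock_prefix_of_le (le_max_left k (i + 1))).getD_eq hk]

-- The bound is strict so that the statement also holds for `k = 0, 1`.
lemma trib_tribonacci_add {k l : ℕ} (h : l + 1 < tribonacci (k + 2) + tribonacci (k + 1)) :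
    trib (tribonacci (k + 3) + l) = trib l := by
  match k, h with
  | 0, h => simp [tribonacci] at h
  | 1, h =>
    obtain rfl : l = 0 := by simp [tribonacci] at h; omega
    rfl
  | k + 2, h =>
    show trib (tribonacci (k + 5) + l) = trib l
    have h' : l + 1 < tribonacci (k + 4) + tribonacci (k + 3) := h
    have hlen : (tribBlock (k + 2)).length = tribonacci (k + 5) := length_tribBlock (k + 2)
    have hl : l < (tribBlock (k + 1) ++ tribBlock k).length := by
      rw [List.length_append, length_tribBlock, length_tribBlock]
      show l < tribonacci (k + 4) + tribonacci (k + 3)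
      omega
    have h6 : tribonacci (k + 6) =
        tribonacci (k + 5) + tribonacci (k + 4) + tribonacci (k + 3) := rfl
    have h5 : tribonacci (k + 5) =
        tribonacci (k + 4) + tribonacci (k + 3) + tribonacci (k + 2) := rfl
    rw [trib_eq_getD_tribBlock (k := k + 3) (show _ < tribonacci (k + 6) by omega),
      tribBlock_add_three, List.append_assoc, List.getD_append_right _ _ _ _ (by omega), hlen,
      Nat.add_sub_cancel_left, ← (tribBlock_append_prefix k).getD_eq hl,
      trib_eq_getD_tribBlock (k := k + 2) (show _ < tribonacci (k + 5) by omega)]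

def prefixCount (c x : ℕ) : ℕ := ∑ l ∈ range x, if trib l = c then 1 else 0

lemma prefixCount_add (c a n : ℕ) : prefixCount c (a + n) = prefixCount c a + tribN c a 1 n := by
  simp only [prefixCount, tribN, sum_range_add, sum_range_one, add_zero]

lemma prefixCount_eq_count_take {c k x : ℕ} (h : x ≤ tribonacci (k + 3)) :
    prefixCount c x = ((tribBlock k).take x).count c := by
  induction x with
  | zero => simp [prefixCount]
  | succ x ih =>
    have hx : x < (tribBlock k).length := by rw [length_tribBlock]; omega
    rw [prefixCount, sum_range_succ, ← prefixCount, ih (by omega), List.take_add_one,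
      List.getElem?_eq_getElem hx, Option.toList_some, List.count_append, List.count_singleton,
      trib_eq_getD_tribBlock (k := k) (by omega), List.getD_eq_getElem _ _ hx]
    simp only [beq_iff_eq]

lemma prefixCount_tribonacci {c : ℕ} (hc : c ≤ 2) (k : ℕ) :
    prefixCount c (tribonacci (k + 3)) = tribonacci (k + 2 - c) := by
  rw [prefixCount_eq_count_take le_rfl, ← length_tribBlock, List.take_length, count_tribBlock hc]

lemma prefixCount_tribonacci_add {c k m : ℕ} (h : m < tribonacci (k + 2) + tribonacci (k + 1)) :
    prefixCount c (tribonacci (k + 3) + m) =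
      prefixCount c (tribonacci (k + 3)) + prefixCount c m := by
  rw [prefixCount_add]
  congr 1
  simp only [tribN, sum_range_one, add_zero]
  exact sum_congr rfl fun l hl => by rw [trib_tribonacci_add (by simp at hl; omega)]

theorem exists_tribonacci_repr (k : ℕ) :
    ∀ x < tribonacci (k + 3), ∃ s ⊆ range k, x = ∑ m ∈ s, tribonacci (m + 3) ∧
      ∀ c, prefixCount c x = ∑ m ∈ s, prefixCount c (tribonacci (m + 3)) := by
  induction k with
  | zero =>
    intro x hx
    obtain rfl : x = 0 := by simpa [tribonacci] using hx
    exact ⟨∅, empty_subset _, rfl, fun c => rfl⟩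
  | succ k ih =>
    intro x hx
    rcases lt_or_ge x (tribonacci (k + 3)) with hlt | hge
    · obtain ⟨s, hs, hx, hc⟩ := ih x hlt
      exact ⟨s, hs.trans (range_subset_range.2 k.le_succ), hx, hc⟩
    · obtain ⟨m, rfl⟩ := Nat.exists_eq_add_of_le hge
      have hm : m < tribonacci (k + 2) + tribonacci (k + 1) := by
        have : tribonacci (k + 1 + 3) =
            tribonacci (k + 3) + tribonacci (k + 2) + tribonacci (k + 1) := rfl
        omega
      obtain ⟨t, ht, rfl, hc⟩ := ih m (by rw [tribonacci_add_three]; omega)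
      have hkt : k ∉ t := fun h => by simpa using ht h
      refine ⟨insert k t, insert_subset (by simp) (ht.trans (range_subset_range.2 k.le_succ)),
        by rw [sum_insert hkt], fun c => ?_⟩
      rw [sum_insert hkt, prefixCount_tribonacci_add hm, hc]

lemma sum_sub_sum_le_sum_abs {ι G : Type*} [AddCommGroup G] [LinearOrder G] [IsOrderedAddMonoid G]
    {s t u : Finset ι} (hs : s ⊆ u) (ht : t ⊆ u) (d : ι → G) :
    ∑ i ∈ s, d i - ∑ i ∈ t, d i ≤ ∑ i ∈ u, |d i| := by
  have hpos : ∑ i ∈ s, d i ≤ ∑ i ∈ u, (d i)⁺ :=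
    (sum_le_sum fun i _ => le_posPart (d i)).trans
      (sum_le_sum_of_subset_of_nonneg hs fun i _ _ => posPart_nonneg (d i))
  have hneg : -∑ i ∈ t, d i ≤ ∑ i ∈ u, (d i)⁻ := by
    rw [← sum_neg_distrib]
    exact (sum_le_sum fun i _ => neg_le_negPart (d i)).trans
      (sum_le_sum_of_subset_of_nonneg ht fun i _ _ => negPart_nonneg (d i))
  calc ∑ i ∈ s, d i - ∑ i ∈ t, d i ≤ ∑ i ∈ u, (d i)⁺ + ∑ i ∈ u, (d i)⁻ := by
        rw [sub_eq_add_neg]; exact add_le_add hpos hneg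
    _ = ∑ i ∈ u, |d i| := by rw [← sum_add_distrib]; simp_rw [posPart_add_negPart]

def letterDiscrepancy (c : ℕ) (α : ℝ) (x : ℕ) : ℝ := prefixCount c x - α * x

lemma letterDiscrepancy_sub_le {c : ℕ} {α S : ℝ}
    (hS : ∀ k, ∑ m ∈ range k, |letterDiscrepancy c α (tribonacci (m + 3))| ≤ S) (x y : ℕ) :
    letterDiscrepancy c α x - letterDiscrepancy c α y ≤ S := by
  have repr : ∀ z ≤ x + y, ∃ s ⊆ range (x + y),
      letterDiscrepancy c α z = ∑ m ∈ s, letterDiscrepancy c α (tribonacci (m + 3)) := by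
    intro z hz
    obtain ⟨s, hs, hsum, hcount⟩ := exists_tribonacci_repr (x + y) z
      (hz.trans_lt (lt_tribonacci _))
    refine ⟨s, hs, ?_⟩
    simp only [letterDiscrepancy, sum_sub_distrib, ← mul_sum]
    rw [hcount c, hsum]
    push_cast
    rfl
  obtain ⟨s, hs, hx⟩ := repr x (Nat.le_add_right x y)
  obtain ⟨t, ht, hy⟩ := repr y (Nat.le_add_left y x)
  rw [hx, hy]
  exact (sum_sub_sum_le_sum_abs hs ht _).trans (hS _)

lemma abs_tribN_sub_le_two {c : ℕ} {α S : ℝ} (hS : S < 3 / 2)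
    (hdisc : ∀ x y, letterDiscrepancy c α x - letterDiscrepancy c α y ≤ S) (i j n : ℕ) :
    |(tribN c i 1 n : ℤ) - (tribN c j 1 n : ℤ)| ≤ 2 := by
  have key : ∀ i j, (tribN c i 1 n : ℝ) - tribN c j 1 n < 3 := by
    intro i j
    have hi := prefixCount_add c i n
    have hj := prefixCount_add c j n
    have e : (tribN c i 1 n : ℝ) - tribN c j 1 n =
        (letterDiscrepancy c α (i + n) - letterDiscrepancy c α (j + n)) +
          (letterDiscrepancy c α j - letterDiscrepancy c α i) := by
      simp only [letterDiscrepancy, hi, hj]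
      push_cast
      ring
    linarith [hdisc (i + n) (j + n), hdisc j i]
  have h1 : (tribN c i 1 n : ℤ) - tribN c j 1 n < 3 := by exact_mod_cast key i j
  have h2 : (tribN c j 1 n : ℤ) - tribN c i 1 n < 3 := by exact_mod_cast key j i
  exact abs_le.2 ⟨by omega, by omega⟩

lemma sum_range_abs_le_of_geometric_tail {d : ℕ → ℝ} {K : ℕ} {H C r : ℝ} (hr₀ : 0 ≤ r)
    (hr₁ : r < 1) (hC : 0 ≤ C) (hhead : ∑ m ∈ range K, |d m| ≤ H)
    (htail : ∀ m, K ≤ m → |d m| ≤ C * r ^ m) (k : ℕ) : ∑ m ∈ range k, |d m| ≤ H + C * (r ^ K / (1 - r)) := by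
  calc ∑ m ∈ range k, |d m| ≤ ∑ m ∈ range (max K k), |d m| :=
        sum_le_sum_of_subset_of_nonneg (range_subset_range.2 (le_max_right K k))
          fun _ _ _ => abs_nonneg _
    _ = ∑ m ∈ range K, |d m| + ∑ m ∈ Ico K (max K k), |d m| :=
        (sum_range_add_sum_Ico _ (le_max_left K k)).symm
    _ ≤ H + ∑ m ∈ Ico K (max K k), C * r ^ m :=
        add_le_add hhead (sum_le_sum fun m hm => htail m (mem_Ico.1 hm).1)
    _ ≤ H + C * (r ^ K / (1 - r)) := by
        rw [← mul_sum]
        gcongr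
        exact geom_sum_Ico_le_of_lt_one hr₀ hr₁

lemma exists_tribonacci_root :
    ∃ β : ℝ, β ^ 3 = β ^ 2 + β + 1 ∧ 1839286755 / 10 ^ 9 ≤ β ∧ β ≤ 1839286756 / 10 ^ 9 := by
  obtain ⟨β, hβ, hroot⟩ := intermediate_value_Icc (a := 1839286755 / 10 ^ 9)
    (b := 1839286756 / 10 ^ 9) (by norm_num)
    (f := fun x : ℝ => x ^ 3 - x ^ 2 - x - 1) (by fun_prop) (show (0 : ℝ) ∈ Set.Icc _ _ by norm_num)
  exact ⟨β, by linarith [show β ^ 3 - β ^ 2 - β - 1 = 0 from hroot], hβ⟩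

-- Subtracting `T (k + 1)` from `β T k` removes the dominant root, leaving the recurrence of the
-- two conjugate roots, of modulus `β^{-1/2}`.
def tribDefect (β : ℝ) (k : ℕ) : ℝ := β * tribonacci k - tribonacci (k + 1)

lemma tribDefect_add_two {β : ℝ} (hβ : β ^ 3 = β ^ 2 + β + 1) (k : ℕ) :
    β * tribDefect β (k + 2) = (β - β ^ 2) * tribDefect β (k + 1) - tribDefect β k := by
  have h : (tribonacci (k + 3) : ℝ) = tribonacci (k + 2) + tribonacci (k + 1) + tribonacci k := by
    exact_mod_cast tribonacci_add_three k
  unfold tribDefect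
  linear_combination (tribonacci (k + 1) : ℝ) * hβ - β * h

def tribDefectForm (β : ℝ) (k : ℕ) : ℝ :=
  β * tribDefect β (k + 1) ^ 2 + β * (β - 1) * tribDefect β k * tribDefect β (k + 1) +
    tribDefect β k ^ 2

lemma tribDefectForm_succ {β : ℝ} (hβ : β ^ 3 = β ^ 2 + β + 1) (k : ℕ) :
    β * tribDefectForm β (k + 1) = tribDefectForm β k := by
  unfold tribDefectForm
  linear_combination (β * tribDefect β (k + 2) + (β - β ^ 2) * tribDefect β (k + 1) -
    tribDefect β k + β * (β - 1) * tribDefect β (k + 1)) * tribDefect_add_two hβ k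

lemma tribDefectForm_mul_pow {β : ℝ} (hβ : β ^ 3 = β ^ 2 + β + 1) (k : ℕ) :
    tribDefectForm β k * β ^ k = β := by
  induction k with
  | zero => simp [tribDefectForm, tribDefect, tribonacci]
  | succ k ih =>
    calc tribDefectForm β (k + 1) * β ^ (k + 1) = β * tribDefectForm β (k + 1) * β ^ k := by ring
      _ = β := by rw [tribDefectForm_succ hβ, ih]

-- The form is at least `(1 - β (β - 1)² / 4) d_k²` and equals `β^{1-k}`, and `59 / 80 > β^{-1/2}`.
lemma abs_tribDefect_le {β : ℝ} (hβ : β ^ 3 = β ^ 2 + β + 1) (hlo : 1839286755 / 10 ^ 9 ≤ β)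
    (hhi : β ≤ 1839286756 / 10 ^ 9) (k : ℕ) :
    |tribDefect β k| ≤ 166 / 100 * (59 / 80) ^ k := by
  have hβ₀ : 0 < β := by linarith
  have hD : 0 < 1 - β * (β - 1) ^ 2 / 4 := by nlinarith
  have hform : (1 - β * (β - 1) ^ 2 / 4) * tribDefect β k ^ 2 ≤ tribDefectForm β k := by
    unfold tribDefectForm
    nlinarith [mul_nonneg hβ₀.le (sq_nonneg (tribDefect β (k + 1) + (β - 1) * tribDefect β k / 2))]
  have hgrowth : 1 ≤ ((59 / 80) ^ k) ^ 2 * β ^ k := by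
    rw [← pow_mul, mul_comm k 2, pow_mul, ← mul_pow]
    exact one_le_pow₀ (by nlinarith)
  have hsq : (1 - β * (β - 1) ^ 2 / 4) * tribDefect β k ^ 2 * β ^ k ≤
      (1 - β * (β - 1) ^ 2 / 4) * (166 / 100 * (59 / 80) ^ k) ^ 2 * β ^ k :=
    calc (1 - β * (β - 1) ^ 2 / 4) * tribDefect β k ^ 2 * β ^ k ≤ tribDefectForm β k * β ^ k := by
          gcongr
      _ = β := tribDefectForm_mul_pow hβ k
      _ ≤ (166 / 100) ^ 2 * (1 - β * (β - 1) ^ 2 / 4) := by nlinarith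
      _ ≤ (166 / 100) ^ 2 * (1 - β * (β - 1) ^ 2 / 4) * (((59 / 80) ^ k) ^ 2 * β ^ k) :=
          le_mul_of_one_le_right (by positivity) hgrowth
      _ = (1 - β * (β - 1) ^ 2 / 4) * (166 / 100 * (59 / 80) ^ k) ^ 2 * β ^ k := by ring
  exact abs_le_of_sq_le_sq (le_of_mul_le_mul_left (le_of_mul_le_mul_right hsq (by positivity)) hD)
    (by positivity)

lemma tribonacci_sub_inv_pow_mul {β : ℝ} (hβ : β ≠ 0) (n j : ℕ) :
    (tribonacci n : ℝ) - β⁻¹ ^ j * tribonacci (n + j) =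
      ∑ i ∈ range j, β⁻¹ ^ (i + 1) * tribDefect β (n + i) := by
  induction j with
  | zero => simp
  | succ j ih =>
    rw [sum_range_succ, ← ih, tribDefect, show n + (j + 1) = n + j + 1 from rfl, pow_succ]
    linear_combination (-(β⁻¹ ^ j * tribonacci (n + j) : ℝ)) * inv_mul_cancel₀ hβ

lemma abs_tribonacci_sub_inv_pow_mul_le {β : ℝ} (hβ : β ^ 3 = β ^ 2 + β + 1)
    (hlo : 1839286755 / 10 ^ 9 ≤ β) (hhi : β ≤ 1839286756 / 10 ^ 9) {c : ℕ} (hc : c ≤ 2) (m : ℕ) :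
    |(tribonacci (m + 2 - c) : ℝ) - β⁻¹ ^ (c + 1) * tribonacci (m + 3)| ≤
      5 * (59 / 80) ^ m := by
  have hβ₁ : 1 ≤ β := by linarith
  rw [show m + 3 = m + 2 - c + (c + 1) by omega,
    tribonacci_sub_inv_pow_mul (by positivity)]
  have hterm :
      ∀ i, |β⁻¹ ^ (i + 1) * tribDefect β (m + 2 - c + i)| ≤ 166 / 100 * (59 / 80) ^ m := by
    intro i
    rw [abs_mul, abs_of_nonneg (by positivity)]
    calc β⁻¹ ^ (i + 1) * |tribDefect β (m + 2 - c + i)|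
        ≤ 1 * (166 / 100 * (59 / 80) ^ (m + 2 - c + i)) :=
          mul_le_mul (pow_le_one₀ (by positivity) (inv_le_one_of_one_le₀ hβ₁))
            (abs_tribDefect_le hβ hlo hhi _) (abs_nonneg _) zero_le_one
      _ ≤ 166 / 100 * (59 / 80) ^ m := by
          rw [one_mul]
          exact mul_le_mul_of_nonneg_left
            (pow_le_pow_of_le_one (a := (59 / 80 : ℝ)) (by norm_num) (by norm_num) (by omega))
            (by norm_num)
  have hc' : (c : ℝ) ≤ 2 := by exact_mod_cast hc
  calc _ ≤ ∑ i ∈ range (c + 1), |β⁻¹ ^ (i + 1) * tribDefect β (m + 2 - c + i)| :=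
        abs_sum_le_sum_abs _ _
    _ ≤ ∑ i ∈ range (c + 1), 166 / 100 * (59 / 80) ^ m := sum_le_sum fun i _ => hterm i
    _ ≤ 5 * (59 / 80) ^ m := by
        rw [sum_const, card_range, nsmul_eq_mul]
        push_cast
        nlinarith [pow_pos (show (0 : ℝ) < 59 / 80 by norm_num) m]

-- `|a - α b|` is convex in `α`, so it suffices to check the endpoints of the rational enclosure
-- of `β⁻¹ ^ (c + 1)`.
lemma sum_range_twenty_abs_tribonacci_sub_inv_pow_mul_le {β : ℝ} (hlo : 1839286755 / 10 ^ 9 ≤ β)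
    (hhi : β ≤ 1839286756 / 10 ^ 9) {c : ℕ} (hc : c ≤ 2) :
    ∑ m ∈ range 20, |(tribonacci (m + 2 - c) : ℝ) - β⁻¹ ^ (c + 1) * tribonacci (m + 3)| ≤
      144 / 100 := by
  have hα₁ : (1839286756 / 10 ^ 9 : ℝ)⁻¹ ^ (c + 1) ≤ β⁻¹ ^ (c + 1) :=
    pow_le_pow_left₀ (by positivity) (inv_anti₀ (by linarith) hhi) _
  have hα₂ : β⁻¹ ^ (c + 1) ≤ (1839286755 / 10 ^ 9 : ℝ)⁻¹ ^ (c + 1) :=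
    pow_le_pow_left₀ (by positivity) (inv_anti₀ (by positivity) hlo) _
  calc _ ≤ ∑ m ∈ range 20,
        max |(tribonacci (m + 2 - c) : ℝ) - (1839286755 / 10 ^ 9)⁻¹ ^ (c + 1) * tribonacci (m + 3)|
          |(tribonacci (m + 2 - c) : ℝ) - (1839286756 / 10 ^ 9)⁻¹ ^ (c + 1) * tribonacci (m + 3)| :=
        sum_le_sum fun m _ => abs_le_max_abs_abs (by gcongr) (by gcongr)
    _ ≤ 144 / 100 := by
        interval_cases c <;> norm_num [sum_range_succ, tribonacci, abs_of_nonneg, abs_of_nonpos]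

lemma sum_abs_letterDiscrepancy_le {β : ℝ} (hβ : β ^ 3 = β ^ 2 + β + 1)
    (hlo : 1839286755 / 10 ^ 9 ≤ β) (hhi : β ≤ 1839286756 / 10 ^ 9) {c : ℕ} (hc : c ≤ 2) (k : ℕ) :
    ∑ m ∈ range k, |letterDiscrepancy c (β⁻¹ ^ (c + 1)) (tribonacci (m + 3))| ≤
      144 / 100 + 5 * ((59 / 80) ^ 20 / (1 - 59 / 80)) := by
  simp only [letterDiscrepancy, prefixCount_tribonacci hc]
  exact sum_range_abs_le_of_geometric_tail (by norm_num) (by norm_num) (by norm_num)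
    (sum_range_twenty_abs_tribonacci_sub_inv_pow_mul_le hlo hhi hc)
    (fun m _ => abs_tribonacci_sub_inv_pow_mul_le hβ hlo hhi hc m) k

theorem trib_one_row_two_balanced (n i j c : ℕ) (hc : c ∈ ({0, 1, 2} : Set ℕ)) :
    |(tribN c i 1 n : ℤ) - (tribN c j 1 n : ℤ)| ≤ 2 := by
  have hc₂ : c ≤ 2 := by
    simp only [Set.mem_insert_iff, Set.mem_singleton_iff] at hc
    omega
  obtain ⟨β, hβ, hlo, hhi⟩ := exists_tribonacci_root
  exact abs_tribN_sub_le_two (by norm_num)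
    (letterDiscrepancy_sub_le (sum_abs_letterDiscrepancy_le hβ hlo hhi hc₂)) i j n
end

section
/- For all integers m, n ≥ 3, the m×n Tribonacci word rectangles are NOT 2-balanced with respect to each other: there exist i, j ≥ 0 and a letter c ∈ {0,1,2} such that |N_c(i,m,n) − N_c(j,m,n)| ≥ 3. -/
namespace TribAux

lemma tribMorph_ne_nil (a : ℕ) : tribMorph a ≠ [] := by
  rcases a with _ | _ | a <;> simp [tribMorph]

lemma block_succ (k : ℕ) : tribBlock (k + 1) = (tribBlock k).flatMap tribMorph := rfl

lemma block_rec (k : ℕ) :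
    tribBlock (k + 3) = tribBlock (k + 2) ++ tribBlock (k + 1) ++ tribBlock k := by
  induction k with
  | zero => rfl
  | succ k ih =>
      show (tribBlock (k + 3)).flatMap tribMorph =
        tribBlock (k + 3) ++ tribBlock (k + 2) ++ tribBlock (k + 1)
      conv_lhs => rw [ih]
      rw [List.flatMap_append, List.flatMap_append]
      rfl

lemma block_prefix (k : ℕ) : ∃ t, t ≠ [] ∧ tribBlock (k + 1) = tribBlock k ++ t := by
  induction k with
  | zero => exact ⟨[1], by simp, rfl⟩
  | succ k ih =>
      obtain ⟨t, ht, he⟩ := ih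
      refine ⟨t.flatMap tribMorph, ?_, ?_⟩
      · rw [Ne, List.flatMap_eq_nil_iff]
        intro h
        rcases List.exists_mem_of_ne_nil t ht with ⟨x, hx⟩
        exact tribMorph_ne_nil x (h x hx)
      · show (tribBlock (k + 1)).flatMap tribMorph =
          tribBlock (k + 1) ++ t.flatMap tribMorph
        conv_lhs => rw [he]
        rw [List.flatMap_append]
        rfl

lemma block_prefix_le {k k' : ℕ} (h : k ≤ k') : ∃ t, tribBlock k' = tribBlock k ++ t := by
  induction k' with
  | zero => exact ⟨[], by simpa using (Nat.le_zero.mp h ▸ rfl)⟩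
  | succ k' ih =>
      rcases Nat.lt_or_ge k (k' + 1) with h' | h'
      · obtain ⟨t, ht⟩ := ih (Nat.lt_succ_iff.mp h')
        obtain ⟨s, _, hs⟩ := block_prefix k'
        exact ⟨t ++ s, by rw [hs, ht, List.append_assoc]⟩
      · have : k = k' + 1 := le_antisymm h h'
        exact ⟨[], by simp [this]⟩

lemma block_length (k : ℕ) : k + 1 ≤ (tribBlock k).length := by
  induction k with
  | zero => simp [tribBlock]
  | succ k ih =>
      obtain ⟨t, ht, he⟩ := block_prefix k
      have : 1 ≤ t.length := List.length_pos_iff.mpr ht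
      rw [he, List.length_append]
      omega

lemma trib_eq (k i : ℕ) (h : i < (tribBlock k).length) :
    trib i = (tribBlock k).getD i 0 := by
  obtain ⟨t, ht⟩ := block_prefix_le (le_max_left (i + 1) k)
  obtain ⟨s, hs⟩ := block_prefix_le (le_max_right (i + 1) k)
  have h1 : i < (tribBlock (i + 1)).length := lt_of_lt_of_le (by omega) (block_length (i + 1))
  have e1 : (tribBlock (max (i + 1) k)).getD i 0 = (tribBlock (i + 1)).getD i 0 := by
    rw [ht]; exact List.getD_append _ _ _ _ h1
  have e2 : (tribBlock (max (i + 1) k)).getD i 0 = (tribBlock k).getD i 0 := by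
    rw [hs]; exact List.getD_append _ _ _ _ h
  show (tribBlock (i + 1)).getD i 0 = _
  rw [← e1, e2]

/-- Occurrence of the prefix at position `|B_{k+3}|`. -/
lemma trib_shift (k x : ℕ)
    (hx : x < (tribBlock (k + 2)).length + (tribBlock (k + 1)).length) :
    trib ((tribBlock (k + 3)).length + x) = trib x := by
  have e4 : tribBlock (k + 4) =
      tribBlock (k + 3) ++ (tribBlock (k + 2) ++ tribBlock (k + 1)) := by
    have h := block_rec (k + 1)
    rw [List.append_assoc] at h
    exact h
  have e3 := block_rec k
  have hlen4 : (tribBlock (k + 4)).length =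
      (tribBlock (k + 3)).length + ((tribBlock (k + 2)).length + (tribBlock (k + 1)).length) := by
    rw [e4]; simp [List.length_append]
  have h1 : (tribBlock (k + 3)).length + x < (tribBlock (k + 4)).length := by omega
  have h2 : x < ((tribBlock (k + 2)) ++ (tribBlock (k + 1))).length := by
    rw [List.length_append]; exact hx
  have h3 : x < (tribBlock (k + 3)).length := by
    rw [e3]; simp [List.length_append]; omega
  rw [trib_eq (k + 4) _ h1, trib_eq (k + 3) x h3, e4,
    List.getD_append_right _ _ _ _ (Nat.le_add_right _ _), Nat.add_sub_cancel_left,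
    e3, List.getD_append _ _ _ _ h2]

/-- The last `t` letters of `B_{k+3}` agree with those of `B_k`. -/
lemma trib_suffix_step (k t : ℕ) (h1 : 1 ≤ t) (h2 : t ≤ (tribBlock k).length) :
    trib ((tribBlock (k + 3)).length - t) = trib ((tribBlock k).length - t) := by
  have e3 := block_rec k
  have hlen : (tribBlock (k + 3)).length =
      ((tribBlock (k + 2)) ++ (tribBlock (k + 1))).length + (tribBlock k).length := by
    rw [e3]; simp [List.length_append]; omega
  have hk : (tribBlock k).length - t < (tribBlock k).length := by omega
  have hix : (tribBlock (k + 3)).length - t < (tribBlock (k + 3)).length := by omega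
  rw [trib_eq (k + 3) _ hix, trib_eq k _ hk]
  have hidx : (tribBlock (k + 3)).length - t =
      ((tribBlock (k + 2)) ++ (tribBlock (k + 1))).length + ((tribBlock k).length - t) := by
    omega
  rw [hidx, e3, List.getD_append_right _ _ _ _ (Nat.le_add_right _ _), Nat.add_sub_cancel_left]

lemma len5 : (tribBlock 5).length = 24 := by decide

lemma base_vals : trib 21 = 1 ∧ trib 22 = 0 ∧ trib 23 = 2 ∧
    trib 4 = 0 ∧ trib 5 = 1 ∧ trib 6 = 0 := by
  have h21 := trib_eq 5 21 (by rw [len5]; omega)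
  have h22 := trib_eq 5 22 (by rw [len5]; omega)
  have h23 := trib_eq 5 23 (by rw [len5]; omega)
  have h4 := trib_eq 5 4 (by rw [len5]; omega)
  have h5 := trib_eq 5 5 (by rw [len5]; omega)
  have h6 := trib_eq 5 6 (by rw [len5]; omega)
  refine ⟨?_, ?_, ?_, ?_, ?_, ?_⟩ <;> first
    | (rw [h21]; decide) | (rw [h22]; decide) | (rw [h23]; decide)
    | (rw [h4]; decide) | (rw [h5]; decide) | (rw [h6]; decide)

/-- Letters just before the prefix occurrence at `|B_{3K+5}|` are `1,0,2`. -/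
lemma endA (K : ℕ) :
    trib ((tribBlock (3 * K + 5)).length - 3) = 1 ∧
    trib ((tribBlock (3 * K + 5)).length - 2) = 0 ∧
    trib ((tribBlock (3 * K + 5)).length - 1) = 2 := by
  induction K with
  | zero =>
      have h := base_vals
      simpa [len5] using ⟨h.1, h.2.1, h.2.2.1⟩
  | succ K ih =>
      have hlen : 3 ≤ (tribBlock (3 * K + 5)).length :=
        le_trans (by omega) (block_length (3 * K + 5))
      have e : 3 * (K + 1) + 5 = (3 * K + 5) + 3 := by ring
      rw [e]
      exact ⟨by rw [trib_suffix_step _ 3 (by omega) (by omega)]; exact ih.1,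
        by rw [trib_suffix_step _ 2 (by omega) (by omega)]; exact ih.2.1,
        by rw [trib_suffix_step _ 1 (by omega) (by omega)]; exact ih.2.2⟩

/-- Letters just before the prefix occurrence at `|B_{3K+3}|` are `0,1,0`. -/
lemma endB (K : ℕ) :
    trib ((tribBlock (3 * K + 3)).length - 3) = 0 ∧
    trib ((tribBlock (3 * K + 3)).length - 2) = 1 ∧
    trib ((tribBlock (3 * K + 3)).length - 1) = 0 := by
  induction K with
  | zero =>
      have h := base_vals
      have l3 : (tribBlock 3).length = 7 := by decide
      simpa [l3] using ⟨h.2.2.2.1, h.2.2.2.2.1, h.2.2.2.2.2⟩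
  | succ K ih =>
      have hlen : 3 ≤ (tribBlock (3 * K + 3)).length :=
        le_trans (by omega) (block_length (3 * K + 3))
      have e : 3 * (K + 1) + 3 = (3 * K + 3) + 3 := by ring
      rw [e]
      exact ⟨by rw [trib_suffix_step _ 3 (by omega) (by omega)]; exact ih.1,
        by rw [trib_suffix_step _ 2 (by omega) (by omega)]; exact ih.2.1,
        by rw [trib_suffix_step _ 1 (by omega) (by omega)]; exact ih.2.2⟩

end TribAux

theorem trib_rectangles_not_two_balanced (m n : ℕ) (hm : 3 ≤ m) (hn : 3 ≤ n) :
    ∃ (i j c : ℕ), c ∈ ({0, 1, 2} : Set ℕ) ∧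
      3 ≤ |(tribN c i m n : ℤ) - (tribN c j m n : ℤ)| := by
  open TribAux in
  set K := m + n with hK
  set Li : ℕ := (tribBlock (3 * K + 5)).length with hLi
  set Lj : ℕ := (tribBlock (3 * K + 3)).length with hLj
  have hLi3 : 3 * K + 6 ≤ Li := block_length _
  have hLj3 : 3 * K + 4 ≤ Lj := block_length _
  refine ⟨Li - 3, Lj - 3, 2, by norm_num, ?_⟩
  have hA := endA K
  have hB := endB K
  -- values of trib on the two rectangles
  have hiv : ∀ s : ℕ, s ≤ m + n - 2 →
      trib (Li - 3 + s) = if s = 0 then 1 else if s = 1 then 0 else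
        if s = 2 then 2 else trib (s - 3) := by
    intro s hs
    rcases s with _ | _ | _ | s
    · simpa using hA.1
    · simpa [show Li - 3 + 1 = Li - 2 by omega] using hA.2.1
    · simpa [show Li - 3 + 2 = Li - 1 by omega] using hA.2.2
    · simp only [if_neg (by omega : ¬ s + 3 = 0), if_neg (by omega : ¬ s + 3 = 1),
        if_neg (by omega : ¬ s + 3 = 2)]
      have h1 : Li - 3 + (s + 3) = Li + s := by omega
      have hlt : s < (tribBlock (3 * K + 4)).length + (tribBlock (3 * K + 3)).length := by
        have := block_length (3 * K + 4)
        omega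
      rw [h1, hLi]
      have := trib_shift (3 * K + 2) s hlt
      simpa using this
  have hjv : ∀ s : ℕ, s ≤ m + n - 2 →
      trib (Lj - 3 + s) = if s = 0 then 0 else if s = 1 then 1 else
        if s = 2 then 0 else trib (s - 3) := by
    intro s hs
    rcases s with _ | _ | _ | s
    · simpa using hB.1
    · simpa [show Lj - 3 + 1 = Lj - 2 by omega] using hB.2.1
    · simpa [show Lj - 3 + 2 = Lj - 1 by omega] using hB.2.2
    · simp only [if_neg (by omega : ¬ s + 3 = 0), if_neg (by omega : ¬ s + 3 = 1),
        if_neg (by omega : ¬ s + 3 = 2)]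
      have h1 : Lj - 3 + (s + 3) = Lj + s := by omega
      have hlt : s < (tribBlock (3 * K + 2)).length + (tribBlock (3 * K + 1)).length := by
        have := block_length (3 * K + 2)
        omega
      rw [h1, hLj]
      have := trib_shift (3 * K) s hlt
      simpa using this
  -- the key identity: tribN 2 i m n = tribN 2 j m n + 3
  have key : tribN 2 (Li - 3) m n = tribN 2 (Lj - 3) m n + 3 := by
    have hterm : ∀ k ∈ Finset.range m, ∀ l ∈ Finset.range n,
        (if trib (Li - 3 + k + l) = 2 then (1:ℕ) else 0) =
        (if trib (Lj - 3 + k + l) = 2 then 1 else 0) + (if k + l = 2 then 1 else 0) := by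
      intro k hk l hl
      rw [Finset.mem_range] at hk hl
      have hs : k + l ≤ m + n - 2 := by omega
      have e1 : Li - 3 + k + l = Li - 3 + (k + l) := by omega
      have e2 : Lj - 3 + k + l = Lj - 3 + (k + l) := by omega
      rw [e1, e2, hiv _ hs, hjv _ hs]
      rcases k + l with _ | _ | _ | s <;> simp
    calc tribN 2 (Li - 3) m n
        = ∑ k ∈ Finset.range m, ∑ l ∈ Finset.range n,
            ((if trib (Lj - 3 + k + l) = 2 then (1:ℕ) else 0) + (if k + l = 2 then 1 else 0)) := by
          unfold tribN
          exact Finset.sum_congr rfl fun k hk =>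
            Finset.sum_congr rfl fun l hl => hterm k hk l hl
      _ = tribN 2 (Lj - 3) m n +
            ∑ k ∈ Finset.range m, ∑ l ∈ Finset.range n, (if k + l = 2 then (1:ℕ) else 0) := by
          unfold tribN
          rw [← Finset.sum_add_distrib]
          exact Finset.sum_congr rfl fun k _ => Finset.sum_add_distrib
      _ = tribN 2 (Lj - 3) m n + 3 := by
          congr 1
          have inner : ∀ k : ℕ, k ≤ 2 →
              (∑ l ∈ Finset.range n, if k + l = 2 then (1:ℕ) else 0) = 1 := by
            intro k hk
            have : ∀ l, (if k + l = 2 then (1:ℕ) else 0) = (if l = 2 - k then 1 else 0) := by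
              intro l
              exact if_congr (by omega) rfl rfl
            simp only [this]
            rw [Finset.sum_ite_eq' (Finset.range n) (2 - k) (fun _ => (1:ℕ))]
            rw [if_pos (Finset.mem_range.mpr (by omega))]
          have outer0 : ∀ k ∈ Finset.range m, k ∉ Finset.range 3 →
              (∑ l ∈ Finset.range n, if k + l = 2 then (1:ℕ) else 0) = 0 := by
            intro k _ hk
            rw [Finset.mem_range] at hk
            exact Finset.sum_eq_zero fun l _ => if_neg (by omega)
          rw [← Finset.sum_subset (Finset.range_subset_range.mpr hm) outer0]
          rw [Finset.sum_range_succ, Finset.sum_range_succ, Finset.sum_range_one]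
          rw [inner 0 (by omega), inner 1 (by omega), inner 2 (by omega)]
  rw [key]
  push_cast
  rw [show ((tribN 2 (Lj - 3) m n : ℤ) + 3) - (tribN 2 (Lj - 3) m n : ℤ) = 3 by ring]
  norm_num
end

section
/- For all integers i, m, n ≥ 0, the number of 1's in the m×n Thue–Morse word rectangle satisfies |2·T(i,m,n) − mn| ≤ 4. -/
/-- The Thue–Morse word `t = 01101001⋯`: `t_i` is the number of 1's in the binary
expansion of `i`, reduced modulo 2. -/
def tm (i : ℕ) : ℕ := (Nat.digits 2 i).count 1 % 2

/-- `T(i,m,n) = ∑_{k<m} ∑_{ℓ<n} t_{i+k+ℓ}`, the number of 1's in the `m × n` word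
rectangle whose `(k,ℓ)` entry is `t_{i+k+ℓ}`. -/
def tmT (i m n : ℕ) : ℕ :=
  ∑ k ∈ Finset.range m, ∑ l ∈ Finset.range n, tm (i + k + l)

/-- signed letter ±1 -/
def td (j : ℕ) : ℤ := 2 * (tm j : ℤ) - 1

/-- discrepancy of prefix sums -/
def Dd (N : ℕ) : ℤ := ∑ j ∈ Finset.range N, td j

def Gd (N : ℕ) : ℤ := ∑ j ∈ Finset.range N, Dd j

lemma tm_lt (j : ℕ) : tm j < 2 := Nat.mod_lt _ (by norm_num)

lemma tm_two_mul (a : ℕ) : tm (2 * a) = tm a := by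
  rcases Nat.eq_zero_or_pos a with h | h
  · subst h; rfl
  · unfold tm
    rw [Nat.digits_def' (by norm_num : 1 < 2) (by omega : 0 < 2 * a)]
    rw [Nat.mul_div_cancel_left a (by norm_num : 0 < 2)]
    simp [Nat.mul_mod_right]

lemma tm_two_mul_add_one (a : ℕ) : tm (2 * a + 1) = (tm a + 1) % 2 := by
  unfold tm
  rw [Nat.digits_def' (by norm_num : 1 < 2) (by omega : 0 < 2 * a + 1)]
  have h1 : (2 * a + 1) % 2 = 1 := by omega
  have h2 : (2 * a + 1) / 2 = a := by omega
  rw [h1, h2]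
  simp [List.count_cons, Nat.add_mod]

lemma Dd_succ (b : ℕ) : Dd (b + 1) = Dd b + td b := Finset.sum_range_succ _ _

lemma Dd_even (b : ℕ) : Dd (2 * b) = 0 := by
  induction b with
  | zero => rfl
  | succ b ih =>
    have h : 2 * (b + 1) = 2 * b + 1 + 1 := by ring
    rw [h, Dd_succ, Dd_succ, ih]
    have h1 := tm_two_mul b
    have h2 := tm_two_mul_add_one b
    have h3 := tm_lt b
    unfold td
    rw [h1, h2]
    have : (tm b + 1) % 2 = 1 - tm b := by omega
    rw [this]
    have : tm b ≤ 1 := by omega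
    push_cast [this]
    ring

lemma Dd_odd (b : ℕ) : Dd (2 * b + 1) = td b := by
  simp only [Dd_succ, Dd_even, td, tm_two_mul]; ring

lemma abs_Dd (N : ℕ) : |Dd N| ≤ 1 := by
  rcases Nat.even_or_odd N with ⟨b, hb⟩ | ⟨b, hb⟩
  · rw [hb, show b + b = 2 * b by ring, Dd_even]; norm_num
  · rw [hb, Dd_odd]
    unfold td
    have := tm_lt b
    interval_cases h : tm b <;> simp

lemma Gd_even (b : ℕ) : Gd (2 * b) = Dd b := by
  induction b with
  | zero => rfl
  | succ b ih =>
    have h : 2 * (b + 1) = 2 * b + 1 + 1 := by ring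
    rw [h, Gd, Finset.sum_range_succ, Finset.sum_range_succ, ← Gd, ih,
      Dd_even, Dd_odd, Dd_succ]
    ring

lemma Gd_eq (N : ℕ) : Gd N = Dd (N / 2) := by
  rcases Nat.even_or_odd N with ⟨b, hb⟩ | ⟨b, hb⟩
  · rw [hb, show b + b = 2 * b by ring, Gd_even]
    congr 1; omega
  · rw [hb, Gd, Finset.sum_range_succ, ← Gd, Gd_even, Dd_even]
    have : (2 * b + 1) / 2 = b := by omega
    rw [this]; ring

lemma abs_Gd (N : ℕ) : |Gd N| ≤ 1 := by rw [Gd_eq]; exact abs_Dd _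

lemma sum_td (M n : ℕ) : ∑ l ∈ Finset.range n, td (M + l) = Dd (M + n) - Dd M := by
  rw [Dd, Dd, Finset.sum_range_add]; ring

lemma sum_Dd (M n : ℕ) : ∑ l ∈ Finset.range n, Dd (M + l) = Gd (M + n) - Gd M := by
  rw [Gd, Gd, Finset.sum_range_add]; ring

theorem tm_rectangle_bound (i m n : ℕ) :
    |2 * (tmT i m n : ℤ) - (m : ℤ) * (n : ℤ)| ≤ 4 := by
  have key : 2 * (tmT i m n : ℤ) - (m : ℤ) * (n : ℤ)
      = Gd (i + n + m) - Gd (i + n) - (Gd (i + m) - Gd i) := by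
    have h1 : 2 * (tmT i m n : ℤ) - (m : ℤ) * (n : ℤ)
        = ∑ k ∈ Finset.range m, ∑ l ∈ Finset.range n, td (i + k + l) := by
      unfold tmT td
      push_cast
      simp only [Finset.sum_sub_distrib, Finset.sum_const, Finset.card_range,
        nsmul_eq_mul, mul_one, Finset.mul_sum]
    rw [h1]
    have h2 : ∀ k, ∑ l ∈ Finset.range n, td (i + k + l)
        = Dd (i + k + n) - Dd (i + k) := fun k => sum_td (i + k) n
    rw [Finset.sum_congr rfl (fun k _ => h2 k), Finset.sum_sub_distrib]
    have h3 : ∑ k ∈ Finset.range m, Dd (i + k + n)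
        = ∑ k ∈ Finset.range m, Dd (i + n + k) := by
      apply Finset.sum_congr rfl; intro k _; congr 1; ring
    rw [h3, sum_Dd, sum_Dd]
  rw [key]
  have a1 := abs_Gd (i + n + m)
  have a2 := abs_Gd (i + n)
  have a3 := abs_Gd (i + m)
  have a4 := abs_Gd i
  rw [abs_le] at *
  constructor <;> linarith [a1.1, a1.2, a2.1, a2.2, a3.1, a3.2, a4.1, a4.2]
end

section
/- For all integers m, n ≥ 0 and every integer c: if there exists i ≥ 0 with 2·T(i,m,n) − mn = c, then there exists j ≥ 0 with 2·T(j,m,n) − mn = −c. -/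
/-! Adding `2 ^ N` to some `x < 2 ^ N` flips `t_x`, so shifting a rectangle lying in `[0, 2 ^ N)`
by `2 ^ N` complements it and turns `2T - mn` into its negative. -/

lemma count_one_digits_add_two_pow {x N : ℕ} (hx : x < 2 ^ N) :
    (Nat.digits 2 (x + 2 ^ N)).count 1 = (Nat.digits 2 x).count 1 + 1 := by
  have hlen : (Nat.digits 2 x).length ≤ N := (Nat.digits_length_le_iff one_lt_two x).mpr hx
  -- the binary expansion of `x + 2 ^ N` is that of `x`, padded with zeroes, followed by a `1`
  have happend := Nat.digits_append_zeroes_append_digits (b := 2)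
    (k := N - (Nat.digits 2 x).length) (m := 1) (n := x) (by norm_num) one_pos
  rw [Nat.add_sub_cancel' hlen, mul_one] at happend
  rw [← happend]
  simp [List.count_append, List.count_replicate]

lemma tm_add_two_pow_add_tm {x N : ℕ} (hx : x < 2 ^ N) : tm (x + 2 ^ N) + tm x = 1 := by
  unfold tm
  rw [count_one_digits_add_two_pow hx]
  omega

lemma tmT_add_two_pow_add_tmT {i m n N : ℕ} (h : i + m + n ≤ 2 ^ N) :
    tmT (i + 2 ^ N) m n + tmT i m n = m * n := by
  unfold tmT
  rw [← Finset.sum_add_distrib]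
  calc ∑ k ∈ Finset.range m, (∑ l ∈ Finset.range n, tm (i + 2 ^ N + k + l)
          + ∑ l ∈ Finset.range n, tm (i + k + l))
      = ∑ _k ∈ Finset.range m, ∑ _l ∈ Finset.range n, 1 := by
        refine Finset.sum_congr rfl fun k hk => ?_
        rw [← Finset.sum_add_distrib]
        refine Finset.sum_congr rfl fun l hl => ?_
        rw [Finset.mem_range] at hk hl
        rw [show i + 2 ^ N + k + l = i + k + l + 2 ^ N by ring]
        exact tm_add_two_pow_add_tm (by omega)
    _ = m * n := by simp

theorem tm_rectangle_symmetry (m n : ℕ) (c : ℤ)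
    (h : ∃ i : ℕ, 2 * (tmT i m n : ℤ) - (m : ℤ) * (n : ℤ) = c) :
    ∃ j : ℕ, 2 * (tmT j m n : ℤ) - (m : ℤ) * (n : ℤ) = -c := by
  obtain ⟨i, rfl⟩ := h
  refine ⟨i + 2 ^ (i + m + n), ?_⟩
  have hsum := tmT_add_two_pow_add_tmT (Nat.lt_two_pow_self (n := i + m + n)).le
  have hsumℤ : (tmT (i + 2 ^ (i + m + n)) m n : ℤ) + tmT i m n = m * n := by exact_mod_cast hsum
  linarith
end

section
/- For all integers m, n ≥ 1, the balance of the m×n Thue–Morse word rectangles is one of 1, 2, 3, or 4; that is, there exist i, j ≥ 0 with T(i,m,n) ≠ T(j,m,n), and |T(i,m,n) − T(j,m,n)| ≤ 4 for all i, j ≥ 0. -/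
namespace TMaux

def u (i : ℕ) : ℤ := 1 - 2 * tm i

lemma tm_cases (i : ℕ) : tm i = 0 ∨ tm i = 1 := by
  have : tm i < 2 := Nat.mod_lt _ (by norm_num)
  omega

lemma u_cases (i : ℕ) : u i = 1 ∨ u i = -1 := by
  rcases tm_cases i with h | h <;> simp [u, h]

lemma tm_two_mul (q : ℕ) : tm (2 * q) = tm q := by
  rcases Nat.eq_zero_or_pos q with h | h
  · simp [h]
  · unfold tm
    rw [Nat.digits_def' (by norm_num : 1 < 2) (by omega)]
    simp [Nat.mul_div_cancel_left, Nat.mul_mod_right, List.count_cons]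

lemma tm_two_mul_add_one (q : ℕ) : tm (2 * q + 1) = (tm q + 1) % 2 := by
  unfold tm
  rw [Nat.digits_def' (by norm_num : 1 < 2) (by omega)]
  have h1 : (2 * q + 1) % 2 = 1 := by omega
  have h2 : (2 * q + 1) / 2 = q := by omega
  rw [h1, h2, List.count_cons]
  simp

lemma u_two_mul (q : ℕ) : u (2 * q) = u q := by simp [u, tm_two_mul]

lemma u_two_mul_add_one (q : ℕ) : u (2 * q + 1) = - u q := by
  rcases tm_cases q with h | h <;>
    simp [u, tm_two_mul_add_one, h]

def V (n : ℕ) : ℤ := ∑ s ∈ Finset.range n, u s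

lemma V_succ (n : ℕ) : V (n + 1) = V n + u n := Finset.sum_range_succ _ _

lemma V_even (q : ℕ) : V (2 * q) = 0 := by
  induction q with
  | zero => simp [V]
  | succ q ih =>
    have e : 2 * (q + 1) = (2 * q + 1) + 1 := by omega
    rw [e, V_succ, V_succ, ih, u_two_mul, u_two_mul_add_one]
    ring

lemma V_odd (q : ℕ) : V (2 * q + 1) = u q := by
  rw [V_succ, V_even, u_two_mul]; ring

lemma V_bound (n : ℕ) : |V n| ≤ 1 := by
  rcases Nat.even_or_odd n with ⟨q, hq⟩ | ⟨q, hq⟩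
  · rw [show n = 2 * q by omega, V_even]; norm_num
  · rw [show n = 2 * q + 1 by omega, V_odd]
    rcases u_cases q with h | h <;> simp [h]


def V2 (j : ℕ) : ℤ := V (j / 2)

lemma V2_bound (j : ℕ) : |V2 j| ≤ 1 := V_bound _

lemma sum_u (a n : ℕ) : ∑ l ∈ Finset.range n, u (a + l) = V (a + n) - V a := by
  induction n with
  | zero => simp
  | succ n ih =>
    rw [Finset.sum_range_succ, ih, show a + (n + 1) = (a + n) + 1 by omega, V_succ]
    ring

lemma sum_V (i m : ℕ) : ∑ k ∈ Finset.range m, V (i + k) = V2 (i + m) - V2 i := by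
  induction m with
  | zero => simp
  | succ m ih =>
    rw [Finset.sum_range_succ, ih, show i + (m + 1) = (i + m) + 1 by omega]
    have key : ∀ j : ℕ, V2 (j + 1) - V2 j = V j := by
      intro j
      rcases Nat.even_or_odd j with ⟨q, hq⟩ | ⟨q, hq⟩
      · have e1 : j = 2 * q := by omega
        subst e1
        have d1 : (2 * q + 1) / 2 = q := by omega
        have d2 : (2 * q) / 2 = q := by omega
        simp [V2, d1, d2, V_even]
      · have e1 : j = 2 * q + 1 := by omega
        subst e1
        have d1 : (2 * q + 1 + 1) / 2 = q + 1 := by omega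
        have d2 : (2 * q + 1) / 2 = q := by omega
        simp [V2, d1, d2, V_odd, V_succ, V_even, u_two_mul]
    have := key (i + m)
    linarith

/-- the rectangle sum of `u`. -/
def P (i m n : ℕ) : ℤ := ∑ k ∈ Finset.range m, (V (i + k + n) - V (i + k))

lemma P_eq (i m n : ℕ) :
    P i m n = (V2 (i + n + m) - V2 (i + n)) - (V2 (i + m) - V2 i) := by
  unfold P
  rw [Finset.sum_sub_distrib]
  have h1 : ∑ k ∈ Finset.range m, V (i + k + n) = ∑ k ∈ Finset.range m, V ((i + n) + k) :=
    Finset.sum_congr rfl fun k _ => by rw [show i + k + n = i + n + k by omega]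
  rw [h1, sum_V, sum_V]

lemma tmT_eq (i m n : ℕ) : 2 * (tmT i m n : ℤ) = m * n - P i m n := by
  have hinner : ∀ k : ℕ, 2 * (∑ l ∈ Finset.range n, (tm (i + k + l) : ℤ))
      = n - (V (i + k + n) - V (i + k)) := by
    intro k
    have := sum_u (i + k) n
    have hterm : ∀ l : ℕ, 2 * (tm (i + k + l) : ℤ) = 1 - u (i + k + l) := by
      intro l; simp [u]
    calc 2 * (∑ l ∈ Finset.range n, (tm (i + k + l) : ℤ))
        = ∑ l ∈ Finset.range n, (2 * (tm (i + k + l) : ℤ)) := by rw [Finset.mul_sum]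
      _ = ∑ l ∈ Finset.range n, ((1 : ℤ) - u (i + k + l)) :=
          Finset.sum_congr rfl fun l _ => hterm l
      _ = n - ∑ l ∈ Finset.range n, u ((i + k) + l) := by
          rw [Finset.sum_sub_distrib]; simp
      _ = n - (V (i + k + n) - V (i + k)) := by rw [sum_u]
  unfold tmT P
  push_cast
  rw [Finset.mul_sum]
  rw [Finset.sum_congr rfl fun k _ => hinner k]
  rw [Finset.sum_sub_distrib]
  simp [Finset.sum_sub_distrib, mul_comm]

lemma P_bound (i m n : ℕ) : |P i m n| ≤ 4 := by
  rw [P_eq]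
  have a1 := V2_bound (i + n + m)
  have a2 := V2_bound (i + n)
  have a3 := V2_bound (i + m)
  have a4 := V2_bound i
  rw [abs_le] at *
  constructor <;> linarith [a1.1, a1.2, a2.1, a2.2, a3.1, a3.2, a4.1, a4.2]

lemma bound_part (m n : ℕ) (i j : ℕ) : |(tmT i m n : ℤ) - (tmT j m n : ℤ)| ≤ 4 := by
  have hi := tmT_eq i m n
  have hj := tmT_eq j m n
  have bi := P_bound i m n
  have bj := P_bound j m n
  rw [abs_le] at *
  constructor <;> linarith [bi.1, bi.2, bj.1, bj.2]

/-- `u` is (eventually, from `s` on) not periodic with period `p ≥ 1`. -/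
def Per (p s : ℕ) : Prop := ∀ x, u (s + x + p) = u (s + x)

lemma noPer : ∀ p, 1 ≤ p → ∀ s, ¬ Per p s := by
  intro p
  induction p using Nat.strong_induction_on with
  | _ p ih =>
    intro hp s hPer
    rcases Nat.even_or_odd p with ⟨f, hf⟩ | ⟨f, hf⟩
    · -- p = 2f
      have hf1 : 1 ≤ f := by omega
      refine ih f (by omega) hf1 s ?_
      intro x
      have h := hPer (s + 2 * x)
      have e1 : s + (s + 2 * x) + p = 2 * (s + x + f) := by omega
      have e2 : s + (s + 2 * x) = 2 * (s + x) := by omega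
      rw [e1, e2, u_two_mul, u_two_mul] at h
      exact h
    · -- p = 2f + 1
      have key1 : ∀ w, s ≤ w → u (w + f) = - u w := by
        intro w hw
        have h := hPer (2 * w - s)
        have e1 : s + (2 * w - s) + p = 2 * (w + f) + 1 := by omega
        have e2 : s + (2 * w - s) = 2 * w := by omega
        rw [e1, e2, u_two_mul_add_one, u_two_mul] at h
        linarith
      have key2 : ∀ w, s ≤ w → u (w + f + 1) = - u w := by
        intro w hw
        have h := hPer (2 * w + 1 - s)
        have e1 : s + (2 * w + 1 - s) + p = 2 * (w + f + 1) := by omega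
        have e2 : s + (2 * w + 1 - s) = 2 * w + 1 := by omega
        rw [e1, e2, u_two_mul, u_two_mul_add_one] at h
        linarith
      -- u (c+1) = u c for all c ≥ s + f ; contradiction at c = 2(s+f)
      have hc : u (2 * (s + f) + 1) = u (2 * (s + f)) := by
        have h1 := key1 (2 * s + f) (by omega)
        have h2 := key2 (2 * s + f) (by omega)
        have e1 : 2 * s + f + f = 2 * (s + f) := by omega
        rw [e1] at h1
        rw [show 2 * s + f + f + 1 = 2 * (s + f) + 1 by omega] at h2
        linarith
      rw [u_two_mul, u_two_mul_add_one] at hc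
      rcases u_cases (s + f) with h | h <;> rw [h] at hc <;> norm_num at hc

lemma stepContra (a d : ℕ)
    (hEq : ∀ y, u (y + a) + u (y + a + d) = u (y + a + 1) + u (y + a + d + 1)) : False := by
  have hconst : ∀ z, u (a + z) + u (a + z + d) = u a + u (a + d) := by
    intro z
    induction z with
    | zero => simp
    | succ z ih =>
      have h := hEq z
      rw [show z + a = a + z by omega] at h
      rw [show a + z + 1 = a + (z + 1) by omega,
          show a + z + d + 1 = a + (z + 1) + d by omega] at h
      linarith
  have hcontr1 : ¬ (∀ z, u (a + z) = u a) := by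
    intro hall
    have h1 := hall a
    have h2 := hall (a + 1)
    rw [show a + a = 2 * a by omega, u_two_mul] at h1
    rw [show a + (a + 1) = 2 * a + 1 by omega, u_two_mul_add_one] at h2
    rcases u_cases a with h | h <;> rw [h] at h1 h2 <;> linarith
  have hantiCase : u a + u (a + d) = 0 → False := by
    intro hsum
    have hd : d ≠ 0 := by
      rintro rfl
      rw [add_zero] at hsum
      rcases u_cases a with h | h <;> rw [h] at hsum <;> linarith
    have hanti : ∀ z, u (a + z + d) = - u (a + z) := by
      intro z; have h := hconst z; linarith
    refine noPer (2 * d) (by omega) a ?_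
    intro x
    have h1 := hanti (x + d)
    have h2 := hanti x
    rw [show a + (x + d) + d = a + x + 2 * d by omega,
        show a + (x + d) = a + x + d by omega] at h1
    rw [h1, h2]; ring
  rcases u_cases a with ha | ha <;> rcases u_cases (a + d) with hb | hb
  · -- 1, 1
    apply hcontr1
    intro z
    have h := hconst z
    rw [ha, hb] at h
    rw [ha]
    rcases u_cases (a + z) with h1 | h1 <;> rcases u_cases (a + z + d) with h2 | h2 <;>
      rw [h1, h2] at h <;> rw [h1] <;> linarith
  · exact hantiCase (by rw [ha, hb]; ring)
  · exact hantiCase (by rw [ha, hb]; ring)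
  · -- -1, -1
    apply hcontr1
    intro z
    have h := hconst z
    rw [ha, hb] at h
    rw [ha]
    rcases u_cases (a + z) with h1 | h1 <;> rcases u_cases (a + z + d) with h2 | h2 <;>
      rw [h1, h2] at h <;> rw [h1] <;> linarith

lemma evenOddContra (a b : ℕ) (ha : 1 ≤ a)
    (H : ∀ x, u x + u (x + 2 * a + (2 * b + 1)) = u (x + 2 * a) + u (x + (2 * b + 1))) :
    False := by
  have hiii : ∀ y, u y + - u (y + a + b) = u (y + a) + - u (y + b) := by
    intro y
    have h := H (2 * y)
    rw [show 2 * y + 2 * a + (2 * b + 1) = 2 * (y + a + b) + 1 by omega,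
        show 2 * y + 2 * a = 2 * (y + a) by omega,
        show 2 * y + (2 * b + 1) = 2 * (y + b) + 1 by omega] at h
    simp only [u_two_mul, u_two_mul_add_one] at h
    linarith
  have hiv : ∀ y, - u y + u (y + a + b + 1) = - u (y + a) + u (y + b + 1) := by
    intro y
    have h := H (2 * y + 1)
    rw [show 2 * y + 1 + 2 * a + (2 * b + 1) = 2 * (y + a + b + 1) by omega,
        show 2 * y + 1 + 2 * a = 2 * (y + a) + 1 by omega,
        show 2 * y + 1 + (2 * b + 1) = 2 * (y + b + 1) by omega] at h
    simp only [u_two_mul, u_two_mul_add_one] at h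
    linarith
  -- h y := u (y + a) - u y satisfies h (y+b) = -h y  and  h (y+b+1) = -h y
  have r1 : ∀ y, u (y + b + a) - u (y + b) = - (u (y + a) - u y) := by
    intro y
    have h := hiii y
    rw [show y + a + b = y + b + a by omega] at h
    linarith
  have r2 : ∀ y, u (y + b + 1 + a) - u (y + b + 1) = - (u (y + a) - u y) := by
    intro y
    have h := hiv y
    rw [show y + a + b + 1 = y + b + 1 + a by omega] at h
    linarith
  have hconst : ∀ z, u (b + z + a) - u (b + z) = u (b + a) - u b := by
    intro z
    induction z with
    | zero => simp
    | succ z ih =>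
      have h1 := r1 z
      have h2 := r2 z
      rw [show z + b + a = b + z + a by omega, show z + b = b + z by omega] at h1
      rw [show z + b + 1 + a = b + (z + 1) + a by omega,
          show z + b + 1 = b + (z + 1) by omega] at h2
      linarith
  have hzero : u (b + a) - u b = 0 := by
    have h1 := r1 (b + a - a)
    rw [show b + a - a = b by omega] at h1
    have h2 := hconst (b + a)
    rw [show b + (b + a) + a = b + a + b + a by omega,
        show b + (b + a) = b + a + b by omega] at h2
    have h3 := r1 (b + a)
    rw [show b + a + b + a = b + a + b + a by omega] at h3
    have h4 := hconst a
    linarith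
  refine noPer a ha b ?_
  intro x
  have h := hconst x
  linarith

lemma noD : ∀ k m n, m + n ≤ k → 1 ≤ m → 1 ≤ n →
    ¬ (∀ x, u x + u (x + m + n) = u (x + m) + u (x + n)) := by
  intro k
  induction k with
  | zero => intro m n h1 h2 h3 _; omega
  | succ k ih =>
    intro m n hk hm hn H
    rcases Nat.mod_two_eq_zero_or_one m with hm2 | hm2 <;>
      rcases Nat.mod_two_eq_zero_or_one n with hn2 | hn2
    · -- m, n even
      refine ih (m / 2) (n / 2) (by omega) (by omega) (by omega) ?_
      intro y
      have h := H (2 * y)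
      rw [show 2 * y + m + n = 2 * (y + m / 2 + n / 2) by omega,
          show 2 * y + m = 2 * (y + m / 2) by omega,
          show 2 * y + n = 2 * (y + n / 2) by omega] at h
      simp only [u_two_mul] at h
      exact h
    · -- m even, n odd
      refine evenOddContra (m / 2) (n / 2) (by omega) ?_
      intro x
      have h := H x
      rw [show x + 2 * (m / 2) + (2 * (n / 2) + 1) = x + m + n by omega,
          show x + 2 * (m / 2) = x + m by omega,
          show x + (2 * (n / 2) + 1) = x + n by omega]
      exact h
    · -- m odd, n even
      refine evenOddContra (n / 2) (m / 2) (by omega) ?_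
      intro x
      have h := H x
      rw [show x + 2 * (n / 2) + (2 * (m / 2) + 1) = x + m + n by omega,
          show x + 2 * (n / 2) = x + n by omega,
          show x + (2 * (m / 2) + 1) = x + m by omega]
      linarith
    · -- m, n odd
      set a := m / 2 with hadef
      set b := n / 2 with hbdef
      have hma : m = 2 * a + 1 := by omega
      have hnb : n = 2 * b + 1 := by omega
      have hi : ∀ y, u y + u (y + a + b + 1) = - u (y + a) + - u (y + b) := by
        intro y
        have h := H (2 * y)
        rw [show 2 * y + m + n = 2 * (y + a + b + 1) by omega,
            show 2 * y + m = 2 * (y + a) + 1 by omega,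
            show 2 * y + n = 2 * (y + b) + 1 by omega] at h
        simp only [u_two_mul, u_two_mul_add_one] at h
        linarith
      have hii : ∀ y, - u y + - u (y + a + b + 1) = u (y + a + 1) + u (y + b + 1) := by
        intro y
        have h := H (2 * y + 1)
        rw [show 2 * y + 1 + m + n = 2 * (y + a + b + 1) + 1 by omega,
            show 2 * y + 1 + m = 2 * (y + a + 1) by omega,
            show 2 * y + 1 + n = 2 * (y + b + 1) by omega] at h
        simp only [u_two_mul, u_two_mul_add_one] at h
        linarith
      have hEq : ∀ y, u (y + a) + u (y + b) = u (y + a + 1) + u (y + b + 1) := by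
        intro y
        have h1 := hi y
        have h2 := hii y
        linarith
      rcases le_total a b with hab | hab
      · refine stepContra a (b - a) ?_
        intro y
        have h := hEq y
        rw [show y + a + (b - a) = y + b by omega]
        linarith
      · refine stepContra b (a - b) ?_
        intro y
        have h := hEq y
        rw [show y + b + (a - b) = y + a by omega]
        linarith

lemma noV (m n : ℕ) (hm : 1 ≤ m) (hn : 1 ≤ n)
    (HV : ∀ i, V (i + m + n) + V i = V (i + m) + V (i + n)) : False := by
  rcases Nat.mod_two_eq_zero_or_one m with hm2 | hm2 <;>
    rcases Nat.mod_two_eq_zero_or_one n with hn2 | hn2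
  · -- m = 2a, n = 2b : reduce to noD
    set a := m / 2
    set b := n / 2
    have h : ∀ x, u x + u (x + a + b) = u (x + a) + u (x + b) := by
      intro x
      have h := HV (2 * x + 1)
      rw [show 2 * x + 1 + m + n = 2 * (x + a + b) + 1 by omega,
          show 2 * x + 1 + m = 2 * (x + a) + 1 by omega,
          show 2 * x + 1 + n = 2 * (x + b) + 1 by omega] at h
      simp only [V_odd] at h
      linarith
    exact noD (a + b) a b le_rfl (by omega) (by omega) h
  · -- m = 2a, n = 2b + 1 : eventual period a
    set a := m / 2
    set b := n / 2
    have h : ∀ x, u (x + a + b) = u (x + b) := by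
      intro x
      have h := HV (2 * x)
      rw [show 2 * x + m + n = 2 * (x + a + b) + 1 by omega,
          show (2 : ℕ) * x = 2 * x from rfl,
          show 2 * x + m = 2 * (x + a) by omega,
          show 2 * x + n = 2 * (x + b) + 1 by omega] at h
      rw [V_odd, V_odd, V_even, V_even] at h
      linarith
    refine noPer a (by omega) b ?_
    intro x
    have h1 := h x
    rw [show x + a + b = b + x + a by omega, show x + b = b + x by omega] at h1
    exact h1
  · -- m = 2a + 1, n = 2b : eventual period b
    set a := m / 2
    set b := n / 2
    have h : ∀ x, u (x + a + b) = u (x + a) := by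
      intro x
      have h := HV (2 * x)
      rw [show 2 * x + m + n = 2 * (x + a + b) + 1 by omega,
          show 2 * x + m = 2 * (x + a) + 1 by omega,
          show 2 * x + n = 2 * (x + b) by omega] at h
      rw [V_odd, V_odd, V_even, V_even] at h
      linarith
    refine noPer b (by omega) a ?_
    intro x
    have h1 := h x
    rw [show x + a + b = a + x + b by omega, show x + a = a + x by omega] at h1
    exact h1
  · -- m = 2a + 1, n = 2b + 1 : antiperiodic with c = a + b + 1
    set a := m / 2
    set b := n / 2
    have h : ∀ x, u (x + (a + b + 1)) = - u x := by
      intro x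
      have h := HV (2 * x + 1)
      rw [show 2 * x + 1 + m + n = 2 * (x + (a + b + 1)) + 1 by omega,
          show 2 * x + 1 + m = 2 * (x + a + 1) by omega,
          show 2 * x + 1 + n = 2 * (x + b + 1) by omega] at h
      rw [V_odd, V_odd, V_even, V_even] at h
      linarith
    refine noPer (2 * (a + b + 1)) (by omega) 0 ?_
    intro x
    have h1 := h (x + (a + b + 1))
    have h2 := h x
    rw [show x + (a + b + 1) + (a + b + 1) = x + 2 * (a + b + 1) by omega] at h1
    rw [show (0 : ℕ) + x = x by omega]
    rw [h1, h2]
    ring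

lemma tele (n : ℕ) : ∀ (M i : ℕ),
    (∑ k ∈ Finset.range M, (V (i + 1 + k + n) - V (i + 1 + k))) + (V (i + n) - V i)
      = (∑ k ∈ Finset.range M, (V (i + k + n) - V (i + k))) + (V (i + M + n) - V (i + M)) := by
  intro M
  induction M with
  | zero => intro i; simp
  | succ M ih =>
    intro i
    rw [Finset.sum_range_succ, Finset.sum_range_succ]
    have h := ih i
    rw [show i + 1 + M + n = i + (M + 1) + n by omega,
        show i + 1 + M = i + (M + 1) by omega]
    linarith

lemma nonconst (m n : ℕ) (hm : 1 ≤ m) (hn : 1 ≤ n) :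
    ∃ i j : ℕ, tmT i m n ≠ tmT j m n := by
  by_contra hcon
  push_neg at hcon
  have hP : ∀ i, P i m n = P 0 m n := by
    intro i
    have h1 := tmT_eq i m n
    have h2 := tmT_eq 0 m n
    have h3 : (tmT i m n : ℤ) = (tmT 0 m n : ℤ) := by exact_mod_cast hcon i 0
    linarith
  have hA : ∀ i, V (i + m + n) - V (i + m) = V (i + n) - V i := by
    intro i
    have e1 : P (i + 1) m n = P i m n := by rw [hP (i + 1), hP i]
    have key := tele n m i
    unfold P at e1
    linarith
  refine noV m n hm hn ?_
  intro i
  have := hA i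
  linarith

end TMaux

theorem tm_rectangle_balance_between_one_and_four (m n : ℕ) (hm : 1 ≤ m) (hn : 1 ≤ n) :
    (∃ i j : ℕ, tmT i m n ≠ tmT j m n) ∧
    (∀ i j : ℕ, |(tmT i m n : ℤ) - (tmT j m n : ℤ)| ≤ 4) := by
  exact ⟨TMaux.nonconst m n hm hn, TMaux.bound_part m n⟩
end

section
/- For all integers m, n ≥ 3, the m×n Thue–Morse word rectangles have balance exactly 3 if and only if m and n are both odd; that is, the following two conditions together — (i) there exist i, j ≥ 0 with |T(i,m,n) − T(j,m,n)| = 3, and (ii) |T(i,m,n) − T(j,m,n)| ≤ 3 for all i, j ≥ 0 — hold if and only if m and n are both odd. -/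
open Finset

theorem tm_le_one (i : ℕ) : tm i ≤ 1 := Nat.le_of_lt_succ (Nat.mod_lt _ two_pos)

theorem tm_two_mul_add_of_le_one (v r : ℕ) (hr : r ≤ 1) : tm (2 * v + r) = (tm v + r) % 2 := by
  rcases Nat.eq_zero_or_pos (2 * v + r) with h | h
  · obtain ⟨rfl, rfl⟩ : v = 0 ∧ r = 0 := by omega
    rfl
  · unfold tm
    rw [Nat.digits_def' one_lt_two h, show (2 * v + r) / 2 = v by omega,
      show (2 * v + r) % 2 = r by omega]
    interval_cases r <;> simp

theorem tm_two_mul_add (v s : ℕ) : tm (2 * v + s) = (tm (v + s / 2) + s) % 2 := by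
  rw [show 2 * v + s = 2 * (v + s / 2) + s % 2 by omega,
    tm_two_mul_add_of_le_one _ _ (by omega)]
  omega

theorem tm_two_pow_add {K v : ℕ} (hv : v < 2 ^ K) : tm (2 ^ K + v) = 1 - tm v := by
  induction K generalizing v with
  | zero =>
    obtain rfl : v = 0 := by omega
    rfl
  | succ K ih =>
    obtain ⟨w, r, hr, rfl⟩ : ∃ w r, r ≤ 1 ∧ v = 2 * w + r := ⟨v / 2, v % 2, by omega, by omega⟩
    rw [pow_succ] at hv ⊢
    rw [show 2 ^ K * 2 + (2 * w + r) = 2 * (2 ^ K + w) + r by ring,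
      tm_two_mul_add_of_le_one _ _ hr, tm_two_mul_add_of_le_one _ _ hr, ih (by omega)]
    have := tm_le_one w
    omega

def DiffPatternOccurs (x z f g : ℕ) : Prop :=
  ∃ q, (tm q + tm (q + x)) % 2 = f ∧ (tm (q + x) + tm (q + z)) % 2 = g

/- Excluding the constant patterns with `z = 2 * x` makes this family closed under halving; some
of them, such as `t_q = t_{q+1} = t_{q+2}`, do not occur at all. -/
def DiffPatternAdmissible (x z f g : ℕ) : Prop :=
  x ≤ z ∧ f ≤ 1 ∧ g ≤ 1 ∧ (x = 0 → f = 0) ∧ (z = x → g = 0) ∧ (f = 0 → g = 0 → z ≠ 2 * x)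

theorem DiffPatternOccurs.of_half {x z f g r : ℕ} (hr : r ≤ 1) (hf : f ≤ 1) (hg : g ≤ 1)
    (h : DiffPatternOccurs ((x + r) / 2) ((z + r) / 2) ((f + x) % 2) ((g + x + z) % 2)) :
    DiffPatternOccurs x z f g := by
  obtain ⟨v, hx, hz⟩ := h
  have hq := tm_two_mul_add_of_le_one v r hr
  have hqx := tm_two_mul_add v (r + x)
  have hqz := tm_two_mul_add v (r + z)
  rw [← add_assoc, add_comm r x] at hqx
  rw [← add_assoc, add_comm r z] at hqz
  exact ⟨2 * v + r, by omega, by omega⟩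

theorem DiffPatternAdmissible.exists_half {x z f g : ℕ} (h : DiffPatternAdmissible x z f g)
    (hz : 2 ≤ z) : ∃ r ≤ 1,
      DiffPatternAdmissible ((x + r) / 2) ((z + r) / 2) ((f + x) % 2) ((g + x + z) % 2) := by
  unfold DiffPatternAdmissible at h ⊢
  by_contra! hne
  have h0 := hne 0 zero_le_one
  have h1 := hne 1 le_rfl
  omega

theorem DiffPatternAdmissible.occurs {x z f g : ℕ} (h : DiffPatternAdmissible x z f g) :
    DiffPatternOccurs x z f g := by
  induction z using Nat.strong_induction_on generalizing x f g with
  | _ z ih =>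
  have ⟨_, hf, hg, hx, hzx, _⟩ := h
  by_cases hz : 2 ≤ z
  · obtain ⟨r, hr, hhalf⟩ := h.exists_half hz
    exact .of_half hr hf hg (ih _ (by omega) hhalf)
  · refine ⟨1 - f - g, ?_⟩
    obtain ⟨rfl, rfl | rfl⟩ : z = 1 ∧ (x = 0 ∨ x = 1) := by omega
    · obtain rfl : f = 0 := hx rfl
      interval_cases g <;> decide
    · obtain rfl : g = 0 := hzx rfl
      interval_cases f <;> decide

theorem exists_tm_eq_one_zero {x z e : ℕ} (hx : 1 ≤ x) (hxz : x ≤ z) (he : e ≤ 1)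
    (hzx : z = x → e = 0) : ∃ w, tm w = 1 ∧ tm (w + x) = 0 ∧ tm (w + z) = e := by
  obtain ⟨q, hqx, hqz⟩ : DiffPatternOccurs x z 1 e :=
    DiffPatternAdmissible.occurs ⟨hxz, le_rfl, he, by omega, hzx, by omega⟩
  have := tm_le_one q
  have := tm_le_one (q + x)
  have := tm_le_one (q + z)
  by_cases hq : tm q = 1
  · exact ⟨q, hq, by omega, by omega⟩
  · have hK : q + z < 2 ^ (q + z) := Nat.lt_two_pow_self
    refine ⟨2 ^ (q + z) + q, ?_, ?_, ?_⟩ <;>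
      simp only [add_assoc, tm_two_pow_add (show q < 2 ^ (q + z) by omega),
        tm_two_pow_add (show q + x < 2 ^ (q + z) by omega), tm_two_pow_add hK] <;> omega

theorem exists_tm_eq_one_zero_zero {x z : ℕ} (hx : 1 ≤ x) (hz : 1 ≤ z) :
    ∃ w, tm w = 1 ∧ tm (w + x) = 0 ∧ tm (w + z) = 0 := by
  rcases le_total x z with h | h
  · exact exists_tm_eq_one_zero hx h zero_le_one fun _ => rfl
  · obtain ⟨w, h1, h2, h3⟩ := exists_tm_eq_one_zero hz h zero_le_one fun _ => rfl
    exact ⟨w, h1, h3, h2⟩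

theorem tmT_two_pow_add {i m n K : ℕ} (h : i + m + n ≤ 2 ^ K) :
    (tmT (2 ^ K + i) m n : ℤ) = m * n - tmT i m n := by
  have hflip : ∀ k ∈ range m, ∀ l ∈ range n,
      (tm (2 ^ K + i + k + l) : ℤ) = 1 - tm (i + k + l) := by
    intro k hk l hl
    rw [mem_range] at hk hl
    rw [add_assoc, add_assoc, ← add_assoc i, tm_two_pow_add (by omega),
      Nat.cast_sub (tm_le_one _), Nat.cast_one]
  simp only [tmT, Nat.cast_sum]
  rw [sum_congr rfl fun k hk => sum_congr rfl (hflip k hk)]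
  simp [sum_sub_distrib]

def tmDisc (N : ℕ) : ℤ := ∑ j ∈ range N, (2 * (tm j : ℤ) - 1)

theorem tmDisc_succ (N : ℕ) : tmDisc (N + 1) = tmDisc N + (2 * tm N - 1) := sum_range_succ _ _

theorem tmDisc_two_mul (k : ℕ) : tmDisc (2 * k) = 0 := by
  induction k with
  | zero => rfl
  | succ k ih =>
    have h0 := tm_two_mul_add_of_le_one k 0 zero_le_one
    rw [add_zero] at h0
    have h1 := tm_two_mul_add_of_le_one k 1 le_rfl
    have := tm_le_one k
    rw [mul_add_one, tmDisc_succ, tmDisc_succ, ih]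
    omega

theorem tmDisc_two_mul_add_one (k : ℕ) : tmDisc (2 * k + 1) = 2 * tm k - 1 := by
  have h := tm_two_mul_add_of_le_one k 0 zero_le_one
  rw [add_zero] at h
  have := tm_le_one k
  rw [tmDisc_succ, tmDisc_two_mul]
  omega

theorem abs_tmDisc_le (N : ℕ) : |tmDisc N| ≤ (N % 2 : ℕ) := by
  obtain ⟨k, rfl | rfl⟩ := Nat.even_or_odd' N
  · simp [tmDisc_two_mul]
  · rw [tmDisc_two_mul_add_one, abs_le]
    have := tm_le_one k
    omega

theorem sum_range_tmDisc (N : ℕ) : ∑ j ∈ range N, tmDisc j = tmDisc (N / 2) := by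
  induction N with
  | zero => rfl
  | succ N ih =>
    rw [sum_range_succ, ih]
    obtain ⟨k, rfl | rfl⟩ := Nat.even_or_odd' N
    · rw [tmDisc_two_mul, show (2 * k + 1) / 2 = k by omega, show 2 * k / 2 = k by omega]
      ring
    · rw [tmDisc_two_mul_add_one, show (2 * k + 1 + 1) / 2 = k + 1 by omega,
        show (2 * k + 1) / 2 = k by omega, tmDisc_succ]

theorem two_mul_tmT (i m n : ℕ) :
    2 * (tmT i m n : ℤ) = m * n + tmDisc ((i + m + n) / 2) - tmDisc ((i + m) / 2)
      - tmDisc ((i + n) / 2) + tmDisc (i / 2) := by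
  have hrow : ∀ k, ∑ l ∈ range n, (2 * (tm (i + k + l) : ℤ) - 1)
      = tmDisc (i + n + k) - tmDisc (i + k) := by
    intro k
    rw [tmDisc, tmDisc, add_right_comm, sum_range_add_sub_sum_range]
  have hcols : ∑ k ∈ range m, (tmDisc (i + n + k) - tmDisc (i + k))
      = tmDisc ((i + m + n) / 2) - tmDisc ((i + n) / 2)
        - (tmDisc ((i + m) / 2) - tmDisc (i / 2)) := by
    rw [sum_sub_distrib, ← sum_range_add_sub_sum_range, ← sum_range_add_sub_sum_range,
      sum_range_tmDisc, sum_range_tmDisc, sum_range_tmDisc, sum_range_tmDisc, add_right_comm i n]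
  have h : 2 * (tmT i m n : ℤ) - m * n
      = ∑ k ∈ range m, ∑ l ∈ range n, (2 * (tm (i + k + l) : ℤ) - 1) := by
    simp [tmT, mul_sum, sum_sub_distrib]
  rw [sum_congr rfl fun k _ => hrow k, hcols] at h
  linarith

theorem abs_two_mul_tmT_sub_le {m n : ℕ} (hm : Odd m) (hn : Odd n) (i : ℕ) :
    |2 * (tmT i m n : ℤ) - m * n| ≤ 3 := by
  have hA := abs_le.mp (abs_tmDisc_le ((i + m + n) / 2))
  have hB := abs_le.mp (abs_tmDisc_le ((i + m) / 2))
  have hC := abs_le.mp (abs_tmDisc_le ((i + n) / 2))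
  have hE := abs_le.mp (abs_tmDisc_le (i / 2))
  have hpar : (i + m + n) / 2 % 2 + (i + m) / 2 % 2 + (i + n) / 2 % 2 + i / 2 % 2 ≤ 3 := by
    obtain ⟨a, rfl⟩ := hm
    obtain ⟨b, rfl⟩ := hn
    omega
  rw [two_mul_tmT, abs_le]
  omega

theorem forall_abs_sub_tmT_le_three_iff (m n : ℕ) :
    (∀ i j : ℕ, |(tmT i m n : ℤ) - (tmT j m n : ℤ)| ≤ 3) ↔
      ∀ i, |2 * (tmT i m n : ℤ) - m * n| ≤ 3 := by
  constructor
  · intro h i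
    have := h i (2 ^ (i + m + n) + i)
    rwa [tmT_two_pow_add Nat.lt_two_pow_self.le, sub_sub_eq_add_sub, ← two_mul] at this
  · intro h i j
    have hi := abs_le.mp (h i)
    have hj := abs_le.mp (h j)
    rw [abs_le]
    constructor <;> linarith

theorem exists_two_mul_tmT_eq {m n : ℕ} (hm : Odd m) (hn : Odd n) (h3m : 3 ≤ m) (h3n : 3 ≤ n) :
    ∃ i, 2 * (tmT i m n : ℤ) = m * n + 3 := by
  have hD0 {N : ℕ} (k : ℕ) (h : N = 2 * k) : tmDisc N = 0 := h ▸ tmDisc_two_mul k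
  have hD1 {N : ℕ} (k : ℕ) (h : N = 2 * k + 1) : tmDisc N = 2 * tm k - 1 :=
    h ▸ tmDisc_two_mul_add_one k
  obtain ⟨a, rfl⟩ := hm
  obtain ⟨b, rfl⟩ := hn
  obtain ⟨p, rfl | rfl⟩ := Nat.even_or_odd' a <;> obtain ⟨r, rfl | rfl⟩ := Nat.even_or_odd' b
  · obtain ⟨w, h0, h1, h2⟩ := exists_tm_eq_one_zero_zero (x := p) (z := r) (by omega) (by omega)
    refine ⟨4 * w + 2, ?_⟩
    rw [two_mul_tmT, hD0 (w + p + r + 1) ?_, hD1 (w + p) ?_, hD1 (w + r) ?_, hD1 w ?_,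
      h0, h1, h2]
    all_goals omega
  · obtain ⟨w, h0, h1, h2⟩ :=
      exists_tm_eq_one_zero (x := p) (z := p + r + 1) (e := 1) (by omega) (by omega) le_rfl
        (by omega)
    refine ⟨4 * w + 2, ?_⟩
    rw [two_mul_tmT, hD1 (w + (p + r + 1)) ?_, hD1 (w + p) ?_, hD0 (w + r + 1) ?_, hD1 w ?_,
      h0, h1, h2]
    all_goals omega
  · obtain ⟨w, h0, h1, h2⟩ :=
      exists_tm_eq_one_zero (x := r) (z := p + r + 1) (e := 1) (by omega) (by omega) le_rfl
        (by omega)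
    refine ⟨4 * w + 2, ?_⟩
    rw [two_mul_tmT, hD1 (w + (p + r + 1)) ?_, hD0 (w + p + 1) ?_, hD1 (w + r) ?_, hD1 w ?_,
      h0, h1, h2]
    all_goals omega
  · obtain ⟨w, h0, h1, h2⟩ :=
      exists_tm_eq_one_zero_zero (x := p + 1) (z := r + 1) (by omega) (by omega)
    refine ⟨4 * w + 3, ?_⟩
    rw [two_mul_tmT, hD0 (w + p + r + 2) ?_, hD1 (w + (p + 1)) ?_, hD1 (w + (r + 1)) ?_,
      hD1 w ?_, h0, h1, h2]
    all_goals omega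

theorem tm_rectangle_balance_three_iff_odd (m n : ℕ) (hm : 3 ≤ m) (hn : 3 ≤ n) :
    ((∃ i j : ℕ, |(tmT i m n : ℤ) - (tmT j m n : ℤ)| = 3) ∧
      (∀ i j : ℕ, |(tmT i m n : ℤ) - (tmT j m n : ℤ)| ≤ 3)) ↔
    (Odd m ∧ Odd n) := by
  rw [forall_abs_sub_tmT_le_three_iff]
  constructor
  · rintro ⟨⟨i, j, hij⟩, hbal⟩
    by_contra hodd
    obtain ⟨e, he⟩ : Even (m * n) := by
      rw [Nat.even_mul, ← Nat.not_odd_iff_even, ← Nat.not_odd_iff_even]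
      tauto
    have hi := abs_le.mp (hbal i)
    have hj := abs_le.mp (hbal j)
    rw [← Nat.cast_mul, he] at hi hj
    rw [abs_eq zero_le_three] at hij
    push_cast at hi hj
    omega
  · rintro ⟨hmo, hno⟩
    obtain ⟨i, hi⟩ := exists_two_mul_tmT_eq hmo hno hm hn
    refine ⟨⟨i, 2 ^ (i + m + n) + i, ?_⟩, abs_two_mul_tmT_sub_le hmo hno⟩
    rw [tmT_two_pow_add Nat.lt_two_pow_self.le, abs_eq zero_le_three]
    left
    linarith
end
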